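/- arXiv:1807.06955 — 8 statements merged into one kernel-verified Lean document; each statement's English description precedes it below -/
import Mathlib

section
/- Let B ∈ M_k(ℂ)⊗M_k(ℂ) be a PPT matrix and let W_1,…,W_s ∈ M_k(ℂ) be orthogonal projections such that W_iW_j = 0 for i ≠ j, Σ_{i=1}^s W_i = Id, and the corner algebra W_iM_kW_i is left invariant by the map X ↦ G_B(X^t) for every i. Then B = Σ_{i=1}^s (W_i^t ⊗ W_i) B (W_i^t ⊗ W_i). -/
open scoped Kronecker ComplexOrder
open Matrix

noncomputable section

/-- `V` is an orthogonal projection. -/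
def IsOrthProj {n : Type*} [Fintype n] (V : Matrix n n ℂ) : Prop :=
  V.IsHermitian ∧ V * V = V

/-- The corner algebra `V M V` is left invariant by `T`. -/
def LeavesInv {n : Type*} [Fintype n] (T : Matrix n n ℂ → Matrix n n ℂ)
    (V : Matrix n n ℂ) : Prop :=
  ∀ X, T (V * X * V) = V * T (V * X * V) * V

/-- `T` sends positive semidefinite matrices to positive semidefinite matrices. -/
def IsPosMap {n p : Type*} [Fintype n] [Fintype p]
    (T : Matrix n n ℂ → Matrix p p ℂ) : Prop :=
  ∀ X, X.PosSemidef → (T X).PosSemidef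

/-- `T` is completely positive, i.e. it has a Kraus decomposition. -/
def IsCPMap {n : Type*} [Fintype n] (T : Matrix n n ℂ → Matrix n n ℂ) : Prop :=
  ∃ (r : ℕ) (A : Fin r → Matrix n n ℂ), ∀ X, T X = ∑ i, A i * X * (A i)ᴴ

/-- The restriction of `T` to the corner algebra of `V` is irreducible. -/
def IsIrredOn {n : Type*} [Fintype n] [DecidableEq n]
    (T : Matrix n n ℂ → Matrix n n ℂ) (V : Matrix n n ℂ) : Prop :=
  ∀ V' : Matrix n n ℂ, IsOrthProj V' →
    LinearMap.range V'.mulVecLin ≤ LinearMap.range V.mulVecLin →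
    LeavesInv T V' → V' = V ∨ V' = 0

/-- `l` is the spectral radius of the restriction of `T` to the corner of `V`. -/
def HasSpecRadOn {n : Type*} [Fintype n] (T : Matrix n n ℂ → Matrix n n ℂ)
    (V : Matrix n n ℂ) (l : ℝ) : Prop :=
  (∃ (μ : ℂ) (X : Matrix n n ℂ), X ≠ 0 ∧ V * X * V = X ∧ T X = μ • X ∧ ‖μ‖ = l) ∧
  ∀ (μ : ℂ) (X : Matrix n n ℂ), X ≠ 0 → V * X * V = X → T X = μ • X → ‖μ‖ ≤ l

/-- `G_A(X)`: the partial trace over the first factor of `(X ⊗ 1) A`; for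
`A = Σ Aᵢ ⊗ Bᵢ` this is `Σ tr(Aᵢ X) Bᵢ`. -/
def Gmap {n p : Type*} [Fintype n] [Fintype p]
    (A : Matrix (n × p) (n × p) ℂ) (X : Matrix n n ℂ) : Matrix p p ℂ :=
  Matrix.of fun j j' => ∑ i, ∑ l, X i l * A (l, j) (i, j')

/-- Partial transposition on the second tensor factor. -/
def ptr {n p : Type*} (A : Matrix (n × p) (n × p) ℂ) : Matrix (n × p) (n × p) ℂ :=
  Matrix.of fun q r => A (q.1, r.2) (r.1, q.2)

/-- `A` is positive under partial transposition. -/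
def IsPPT {n p : Type*} [Fintype n] [Fintype p]
    (A : Matrix (n × p) (n × p) ℂ) : Prop :=
  A.PosSemidef ∧ (ptr A).PosSemidef

/-- Doubly stochastic positive map: `T(Id/√k) = Id/√m` and `T^*(Id/√m) = Id/√k`,
the latter expressed via the trace characterization of the adjoint. -/
def IsDoublyStochastic {n p : Type*} [Fintype n] [Fintype p] [DecidableEq n] [DecidableEq p]
    (T : Matrix n n ℂ → Matrix p p ℂ) : Prop :=
  IsPosMap T ∧
  T ((Real.sqrt (Fintype.card n) : ℂ)⁻¹ • 1) = (Real.sqrt (Fintype.card p) : ℂ)⁻¹ • 1 ∧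
  ∀ X : Matrix n n ℂ,
    (Real.sqrt (Fintype.card p) : ℂ)⁻¹ * (T X).trace
      = (Real.sqrt (Fintype.card n) : ℂ)⁻¹ * X.trace

/-- `T` is equivalent to a doubly stochastic map. -/
def EquivDS {n p : Type*} [Fintype n] [Fintype p] [DecidableEq n] [DecidableEq p]
    (T : Matrix n n ℂ → Matrix p p ℂ) : Prop :=
  ∃ (R : Matrix n n ℂ) (S : Matrix p p ℂ), IsUnit R ∧ IsUnit S ∧
    IsDoublyStochastic fun X => S * T (R * X * Rᴴ) * Sᴴ

/-- `W` is a solution of Problem 1 subjected to a map with adjoint `Tstar` and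
the orthogonal projection `V`. -/
def IsSolutionW {n : Type*} [Fintype n] [DecidableEq n]
    (Tstar : Matrix n n ℂ → Matrix n n ℂ) (V W : Matrix n n ℂ) : Prop :=
  IsOrthProj W ∧ LeavesInv Tstar W ∧ IsIrredOn Tstar W ∧
    W.rank = V.rank ∧
    LinearMap.ker W.mulVecLin ⊓ LinearMap.range V.mulVecLin = ⊥

/-- The property appearing in item 3 of the main theorem: for every invariant
irreducible corner `V` with spectral radius `l` there is a unique solution `W`
of Problem 1 with spectral radius `l`. -/
def UniqueWProp {n : Type*} [Fintype n] [DecidableEq n]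
    (T Tstar : Matrix n n ℂ → Matrix n n ℂ) : Prop :=
  ∀ (V : Matrix n n ℂ) (l : ℝ), IsOrthProj V → LeavesInv T V → IsIrredOn T V →
    HasSpecRadOn T V l →
    ∃! W : Matrix n n ℂ, IsOrthProj W ∧ LeavesInv Tstar W ∧ IsIrredOn Tstar W ∧
      HasSpecRadOn Tstar W l ∧ W.rank = V.rank ∧
      LinearMap.ker W.mulVecLin ⊓ LinearMap.range V.mulVecLin = ⊥

/-- `ℂ^n` is the (not necessarily orthogonal) direct sum of the images of the `V i`. -/
def IsDirectSumDecomp {n : Type*} [Fintype n] {s : ℕ}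
    (V : Fin s → Matrix n n ℂ) : Prop :=
  (⨆ i, LinearMap.range (V i).mulVecLin) = ⊤ ∧
    iSupIndep fun i => LinearMap.range (V i).mulVecLin

/-!
Put `Q a b = W aᵀ ⊗ W b`: orthogonal projections summing to `1`. The entries of
`Q a b * B * Q a b` are those of `W b * G_B((W a X W a)ᵀ) * W b`, which by corner invariance equals
`W b * W a * (⋯) * W a * W b = 0` for `a ≠ b`; as `B ≥ 0`, this forces `B * Q a b = Q a b * B = 0`,
so `B = ∑ a c, Q a a * B * Q c c`. Partial transposition turns `Q a c * B * Q a c = 0` into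
`P * Bᵗ² * P = 0` with `P = W aᵀ ⊗ W cᵀ`, hence `P * Bᵗ² = 0` as `Bᵗ² ≥ 0`; and it turns
`Q a a * B * Q c c` into `P * Bᵗ² * (W cᵀ ⊗ W aᵀ)`, which therefore vanishes for `a ≠ c`.
-/

namespace Matrix

theorem IsHermitian.kronecker {α l m : Type*} [CommSemiring α] [StarRing α]
    {A : Matrix l l α} {B : Matrix m m α} (hA : A.IsHermitian) (hB : B.IsHermitian) :
    (A ⊗ₖ B).IsHermitian := by
  rw [IsHermitian, conjTranspose_kronecker, hA.eq, hB.eq]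

theorem sum_kronecker_sum {α ι κ l m n p : Type*} [CommSemiring α] [Fintype ι] [Fintype κ]
    (A : ι → Matrix l m α) (B : κ → Matrix n p α) :
    (∑ a, A a) ⊗ₖ (∑ b, B b) = ∑ a, ∑ b, A a ⊗ₖ B b := by
  ext ⟨i₁, i₂⟩ ⟨j₁, j₂⟩
  simp only [kronecker_apply, sum_apply, Finset.sum_mul_sum]

theorem PosSemidef.mul_eq_zero_of_mul_mul_eq_zero {𝕜 n : Type*} [RCLike 𝕜] [Fintype n]
    [DecidableEq n] {B P : Matrix n n 𝕜} (hB : B.PosSemidef) (hP : P.IsHermitian)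
    (h : P * B * P = 0) : B * P = 0 := by
  open scoped MatrixOrder Matrix.Norms.L2Operator in
  obtain ⟨C, rfl⟩ := CStarAlgebra.nonneg_iff_eq_star_mul_self.mp hB.nonneg
  have hCP : C * P = 0 := by
    rw [← conjTranspose_mul_self_eq_zero, conjTranspose_mul, hP.eq, ← h]
    simp only [star_eq_conjTranspose, Matrix.mul_assoc]
  rw [Matrix.mul_assoc, hCP, Matrix.mul_zero]

theorem PosSemidef.mul_eq_zero_of_mul_mul_eq_zero' {𝕜 n : Type*} [RCLike 𝕜] [Fintype n]
    [DecidableEq n] {B P : Matrix n n 𝕜} (hB : B.PosSemidef) (hP : P.IsHermitian)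
    (h : P * B * P = 0) : P * B = 0 := by
  simpa [conjTranspose_mul, hB.1.eq, hP.eq] using
    congrArg (·ᴴ) (hB.mul_eq_zero_of_mul_mul_eq_zero hP h)

end Matrix

section PartialTranspose

variable {n p : Type*}

@[simp]
theorem ptr_ptr (A : Matrix (n × p) (n × p) ℂ) : ptr (ptr A) = A := rfl

@[simp]
theorem ptr_zero : ptr (0 : Matrix (n × p) (n × p) ℂ) = 0 := rfl

theorem ptr_injective : Function.Injective (ptr : Matrix (n × p) (n × p) ℂ → _) :=
  Function.LeftInverse.injective ptr_ptr

theorem ptr_kronecker_mul_mul_kronecker [Fintype n] [Fintype p]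
    (X Z : Matrix n n ℂ) (Y V : Matrix p p ℂ) (C : Matrix (n × p) (n × p) ℂ) :
    ptr ((X ⊗ₖ Y) * C * (Z ⊗ₖ V)) = (X ⊗ₖ Vᵀ) * ptr C * (Z ⊗ₖ Yᵀ) := by
  ext ⟨l, j⟩ ⟨i, j'⟩
  simp only [ptr, of_apply, mul_apply, kroneckerMap_apply, transpose_apply, Finset.sum_mul]
  rw [← Finset.sum_product', ← Finset.sum_product', Finset.univ_product_univ]
  let e : (n × p) × n × p ≃ (n × p) × n × p :=
    ⟨fun q => ((q.1.1, q.2.2), (q.2.1, q.1.2)), fun q => ((q.1.1, q.2.2), (q.2.1, q.1.2)),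
      fun _ => rfl, fun _ => rfl⟩
  refine Fintype.sum_equiv e _ _ fun _ => ?_
  simp only [e, Equiv.coe_fn_mk]
  ring

end PartialTranspose

theorem kronecker_mul_mul_kronecker_apply {n p : Type*} [Fintype n] [Fintype p] [DecidableEq n]
    (B : Matrix (n × p) (n × p) ℂ) (P R : Matrix n n ℂ) (Q S : Matrix p p ℂ) (l i : n)
    (j j' : p) :
    ((Pᵀ ⊗ₖ Q) * B * (Rᵀ ⊗ₖ S)) (l, j) (i, j') =
      (Q * Gmap B (P * single l i 1 * R)ᵀ * S) j j' := by
  have hY : (P * single l i 1 * R)ᵀ = of fun a b => P b l * R i a := by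
    ext a b
    simp [mul_apply, single, ite_and, mul_ite, ite_mul, Finset.sum_ite_eq]
  rw [hY]
  simp only [mul_apply, Gmap, of_apply, kroneckerMap_apply, Fintype.sum_prod_type,
    transpose_apply, Finset.sum_mul, Finset.mul_sum]
  rw [Finset.sum_comm]
  refine Finset.sum_congr rfl fun b _ => ?_
  conv_lhs => enter [2, a]; rw [Finset.sum_comm]
  rw [Finset.sum_comm]
  refine Finset.sum_congr rfl fun d _ => ?_
  refine Finset.sum_congr rfl fun a _ => ?_
  refine Finset.sum_congr rfl fun c _ => ?_
  ring

theorem kronecker_mul_mul_kronecker_eq_zero_of_leavesInv {n : Type*} [Fintype n] [DecidableEq n]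
    (B : Matrix (n × n) (n × n) ℂ) {U V : Matrix n n ℂ}
    (hV : LeavesInv (fun X => Gmap B Xᵀ) V) (hUV : U * V = 0) :
    (Vᵀ ⊗ₖ U) * B * (Vᵀ ⊗ₖ U) = 0 := by
  ext ⟨l, j⟩ ⟨i, j'⟩
  rw [kronecker_mul_mul_kronecker_apply, show Gmap B (V * single l i 1 * V)ᵀ = _ from hV _,
    ← Matrix.mul_assoc, ← Matrix.mul_assoc, hUV]
  simp

theorem kronecker_mul_mul_kronecker_eq_zero_of_posSemidef_ptr {n : Type*} [Fintype n]
    [DecidableEq n] {B : Matrix (n × n) (n × n) ℂ} (hB : (ptr B).PosSemidef)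
    {U V : Matrix n n ℂ} (hU : U.IsHermitian) (hV : V.IsHermitian)
    (h : (Vᵀ ⊗ₖ U) * B * (Vᵀ ⊗ₖ U) = 0) :
    (Vᵀ ⊗ₖ V) * B * (Uᵀ ⊗ₖ U) = 0 := by
  have hkill : (Vᵀ ⊗ₖ Uᵀ) * ptr B = 0 :=
    hB.mul_eq_zero_of_mul_mul_eq_zero' (hV.transpose.kronecker hU.transpose) <| by
      rw [← ptr_kronecker_mul_mul_kronecker, h, ptr_zero]
  apply ptr_injective
  rw [ptr_kronecker_mul_mul_kronecker, hkill, Matrix.zero_mul, ptr_zero]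

theorem eq_sum_mul_mul_of_sum_sum_eq_one {R ι : Type*} [Semiring R] [Fintype ι] [DecidableEq ι]
    {e : ι → ι → R} {x : R} (he : ∑ a, ∑ b, e a b = 1)
    (hright : ∀ a b, a ≠ b → x * e a b = 0) (hleft : ∀ a b, a ≠ b → e a b * x = 0)
    (hdiag : ∀ a c, a ≠ c → e a a * x * e c c = 0) :
    x = ∑ a, e a a * x * e a a := by
  have hx_right : x = ∑ c, x * e c c := by
    conv_lhs => rw [← mul_one x, ← he]
    simp only [Finset.mul_sum]
    exact Finset.sum_congr rfl fun c _ =>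
      Finset.sum_eq_single c (fun b _ hb => hright c b hb.symm) (by simp)
  have hx_left : x = ∑ a, e a a * x := by
    conv_lhs => rw [← one_mul x, ← he]
    simp only [Finset.sum_mul]
    exact Finset.sum_congr rfl fun a _ =>
      Finset.sum_eq_single a (fun b _ hb => hleft a b hb.symm) (by simp)
  calc x = ∑ a, e a a * x := hx_left
    _ = ∑ a, ∑ c, e a a * (x * e c c) :=
        Finset.sum_congr rfl fun a _ => by rw [← Finset.mul_sum, ← hx_right]
    _ = ∑ a, ∑ c, e a a * x * e c c := by simp only [mul_assoc]
    _ = ∑ a, e a a * x * e a a :=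
        Finset.sum_congr rfl fun a _ =>
          Finset.sum_eq_single a (fun c _ hc => hdiag a c hc.symm) (by simp)

/-- Proposition 4 (complete reducibility of PPT states): if `B ∈ M_k ⊗ M_k` is PPT
and `W₁,…,W_s` are pairwise orthogonal projections summing to the identity whose
corners are left invariant by `X ↦ G_B(Xᵗ)`, then
`B = Σᵢ (Wᵢᵗ ⊗ Wᵢ) B (Wᵢᵗ ⊗ Wᵢ)`. -/
theorem stmt0 {k : ℕ} (B : Matrix (Fin k × Fin k) (Fin k × Fin k) ℂ)
    (hPPT : IsPPT B) (s : ℕ) (W : Fin s → Matrix (Fin k) (Fin k) ℂ)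
    (hproj : ∀ i, IsOrthProj (W i))
    (horth : ∀ i j, i ≠ j → W i * W j = 0)
    (hsum : ∑ i, W i = 1)
    (hinv : ∀ i, LeavesInv (fun X => Gmap B Xᵀ) (W i)) :
    B = ∑ i, ((W i)ᵀ ⊗ₖ W i) * B * ((W i)ᵀ ⊗ₖ W i) := by
  obtain ⟨hB, hBt⟩ := hPPT
  have hherm (a b : Fin s) : ((W a)ᵀ ⊗ₖ W b).IsHermitian :=
    (hproj a).1.transpose.kronecker (hproj b).1
  have hoff (a b : Fin s) (hab : a ≠ b) : ((W a)ᵀ ⊗ₖ W b) * B * ((W a)ᵀ ⊗ₖ W b) = 0 :=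
    kronecker_mul_mul_kronecker_eq_zero_of_leavesInv B (hinv a) (horth b a hab.symm)
  refine eq_sum_mul_mul_of_sum_sum_eq_one (e := fun a b => (W a)ᵀ ⊗ₖ W b) ?_
    (fun a b hab => hB.mul_eq_zero_of_mul_mul_eq_zero (hherm a b) (hoff a b hab))
    (fun a b hab => hB.mul_eq_zero_of_mul_mul_eq_zero' (hherm a b) (hoff a b hab))
    (fun a c hac => kronecker_mul_mul_kronecker_eq_zero_of_posSemidef_ptr hBt
      (hproj c).1 (hproj a).1 (hoff a c hac))
  rw [← sum_kronecker_sum, ← transpose_sum, hsum, transpose_one, one_kronecker_one]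

end
end

section
/- Let B ∈ M_k(ℂ)⊗M_k(ℂ) be a PPT matrix and let W_1,…,W_s ∈ M_k(ℂ) be orthogonal projections such that W_iW_j = 0 for i ≠ j, Σ_{i=1}^s W_i = Id, and W_iM_kW_i is left invariant by the map X ↦ G_B(X^t) for every i. Then for all j ≠ m: B(W_j^t⊗W_m) = (W_j^t⊗W_m)B = 0 and B^{t₂}(W_j^t⊗W_m^t) = (W_j^t⊗W_m^t)B^{t₂} = 0, where B^{t₂} is the partial transpose of B. -/
open scoped Kronecker ComplexOrder
open Matrix

noncomputable section

/-!
Invariance of the corner of `W j` under `X ↦ G_B(Xᵀ)`, applied to `X = 1`, puts `G_B((W j)ᵀ)` in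
`W j M_k W j`, so `tr(B ((W j)ᵀ ⊗ W m)) = tr(G_B((W j)ᵀ) W m) = 0` for `j ≠ m`; partial
transposition moves this to `tr(ptr B ((W j)ᵀ ⊗ (W m)ᵀ)) = 0`. A positive semidefinite matrix
whose trace against an orthogonal projection vanishes is annihilated by that projection on both
sides, since `tr(A P) = tr(P A P)` and `P A P = (C P)ᴴ (C P)` for `A = Cᴴ C`.
-/

namespace Matrix

variable {𝕜 n m : Type*} [RCLike 𝕜] [Fintype n]

theorem PosSemidef.mul_eq_zero_of_conjTranspose_mul_mul_eq_zero {A : Matrix n n 𝕜}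
    (hA : A.PosSemidef) {P : Matrix n m 𝕜} (h : Pᴴ * A * P = 0) : A * P = 0 := by
  classical
  open scoped MatrixOrder in
  obtain ⟨C, rfl⟩ := CStarAlgebra.nonneg_iff_eq_star_mul_self.mp hA.nonneg
  rw [star_eq_conjTranspose, conjTranspose_mul_self_mul_eq_zero, ← conjTranspose_mul_self_eq_zero]
  simpa only [conjTranspose_mul, star_eq_conjTranspose, Matrix.mul_assoc] using h

theorem PosSemidef.mul_eq_zero_of_trace_mul_eq_zero {A P : Matrix n n 𝕜} (hA : A.PosSemidef)
    (hP : P.IsHermitian) (hPP : IsIdempotentElem P) (h : (A * P).trace = 0) :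
    A * P = 0 ∧ P * A = 0 := by
  have hPAP : Pᴴ * A * P = 0 := by
    refine (hA.conjTranspose_mul_mul_same P).trace_eq_zero_iff.mp ?_
    rw [hP.eq, Matrix.mul_assoc, trace_mul_comm, Matrix.mul_assoc, hPP.eq, h]
  have hAP := hA.mul_eq_zero_of_conjTranspose_mul_mul_eq_zero hPAP
  refine ⟨hAP, ?_⟩
  simpa only [conjTranspose_mul, hP.eq, hA.isHermitian.eq, conjTranspose_zero] using
    congrArg (·ᴴ) hAP

end Matrix

theorem IsOrthProj.transpose {n : Type*} [Fintype n] {V : Matrix n n ℂ} (hV : IsOrthProj V) :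
    IsOrthProj Vᵀ :=
  ⟨hV.1.transpose, by rw [← transpose_mul, hV.2]⟩

theorem IsOrthProj.kronecker {n p : Type*} [Fintype n] [Fintype p] {V : Matrix n n ℂ}
    {W : Matrix p p ℂ} (hV : IsOrthProj V) (hW : IsOrthProj W) : IsOrthProj (V ⊗ₖ W) :=
  ⟨by rw [IsHermitian, conjTranspose_kronecker, hV.1.eq, hW.1.eq], by
    rw [← mul_kronecker_mul, hV.2, hW.2]⟩

theorem trace_mul_kronecker_eq_trace_Gmap_mul {n p : Type*} [Fintype n] [Fintype p]
    (B : Matrix (n × p) (n × p) ℂ) (X : Matrix n n ℂ) (Y : Matrix p p ℂ) :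
    (B * (X ⊗ₖ Y)).trace = (Gmap B X * Y).trace := by
  simp only [Matrix.trace, Matrix.diag, mul_apply, Gmap, kroneckerMap_apply, of_apply,
    Fintype.sum_prod_type, Finset.sum_mul]
  rw [Finset.sum_comm]
  refine Finset.sum_congr rfl fun _ _ => ?_
  rw [Finset.sum_comm_cycle]
  refine Finset.sum_congr rfl fun _ _ => ?_
  rw [Finset.sum_comm]
  exact Finset.sum_congr rfl fun _ _ => Finset.sum_congr rfl fun _ _ => by ring

theorem trace_ptr_mul_kronecker {n p : Type*} [Fintype n] [Fintype p]
    (B : Matrix (n × p) (n × p) ℂ) (X : Matrix n n ℂ) (Y : Matrix p p ℂ) :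
    (ptr B * (X ⊗ₖ Y)).trace = (B * (X ⊗ₖ Yᵀ)).trace := by
  simp only [Matrix.trace, Matrix.diag, mul_apply, ptr, kroneckerMap_apply, of_apply,
    transpose_apply, Fintype.sum_prod_type]
  refine Finset.sum_congr rfl fun _ _ => ?_
  rw [Finset.sum_comm_cycle]
  exact Finset.sum_congr rfl fun _ _ => Finset.sum_comm

theorem stmt1_general {k : ℕ} (B : Matrix (Fin k × Fin k) (Fin k × Fin k) ℂ)
    (hPPT : IsPPT B) (s : ℕ) (W : Fin s → Matrix (Fin k) (Fin k) ℂ)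
    (hproj : ∀ i, IsOrthProj (W i))
    (horth : ∀ i j, i ≠ j → W i * W j = 0)
    (hinv : ∀ i, LeavesInv (fun X => Gmap B Xᵀ) (W i)) :
    ∀ j m : Fin s, j ≠ m →
      B * ((W j)ᵀ ⊗ₖ W m) = 0 ∧ ((W j)ᵀ ⊗ₖ W m) * B = 0 ∧
      ptr B * ((W j)ᵀ ⊗ₖ (W m)ᵀ) = 0 ∧ ((W j)ᵀ ⊗ₖ (W m)ᵀ) * ptr B = 0 := by
  intro j m hjm
  have hcorner : Gmap B (W j)ᵀ = W j * Gmap B (W j)ᵀ * W j := by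
    simpa only [Matrix.mul_one, (hproj j).2] using hinv j 1
  have htrace : (B * ((W j)ᵀ ⊗ₖ W m)).trace = 0 := by
    rw [trace_mul_kronecker_eq_trace_Gmap_mul, hcorner, Matrix.mul_assoc, Matrix.mul_assoc,
      horth j m hjm, Matrix.mul_zero, Matrix.mul_zero, trace_zero]
  have htrace_ptr : (ptr B * ((W j)ᵀ ⊗ₖ (W m)ᵀ)).trace = 0 := by
    rw [trace_ptr_mul_kronecker, transpose_transpose, htrace]
  have hP := (hproj j).transpose.kronecker (hproj m)
  have hQ := (hproj j).transpose.kronecker (hproj m).transpose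
  obtain ⟨hBP, hPB⟩ := hPPT.1.mul_eq_zero_of_trace_mul_eq_zero hP.1 hP.2 htrace
  obtain ⟨hBQ, hQB⟩ := hPPT.2.mul_eq_zero_of_trace_mul_eq_zero hQ.1 hQ.2 htrace_ptr
  exact ⟨hBP, hPB, hBQ, hQB⟩

/-- Equations (3) and (4) in the proof of Proposition 4: under the hypotheses of
the complete reducibility property, the off-diagonal compressions of `B` and of
its partial transpose vanish. -/
theorem stmt1 {k : ℕ} (B : Matrix (Fin k × Fin k) (Fin k × Fin k) ℂ)
    (hPPT : IsPPT B) (s : ℕ) (W : Fin s → Matrix (Fin k) (Fin k) ℂ)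
    (hproj : ∀ i, IsOrthProj (W i))
    (horth : ∀ i j, i ≠ j → W i * W j = 0)
    (hsum : ∑ i, W i = 1)
    (hinv : ∀ i, LeavesInv (fun X => Gmap B Xᵀ) (W i)) :
    ∀ j m : Fin s, j ≠ m →
      B * ((W j)ᵀ ⊗ₖ W m) = 0 ∧ ((W j)ᵀ ⊗ₖ W m) * B = 0 ∧
      ptr B * ((W j)ᵀ ⊗ₖ (W m)ᵀ) = 0 ∧ ((W j)ᵀ ⊗ₖ (W m)ᵀ) * ptr B = 0 :=
  stmt1_general B hPPT s W hproj horth hinv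

end
end

section
/- Let T : M_k(ℂ) → M_k(ℂ) be a positive map and Q ∈ M_k(ℂ) an invertible matrix. Assume T has the following property: for every orthogonal projection V ∈ M_k(ℂ) such that T(VM_kV) ⊆ VM_kV and T|_{VM_kV} is irreducible with spectral radius λ, there is a unique orthogonal projection W ∈ M_k(ℂ) such that T*(WM_kW) ⊆ WM_kW, T*|_{WM_kW} is irreducible with spectral radius λ, rank(W) = rank(V), and ker(W) ∩ Im(V) = {0}. Then the same property holds for the map S : M_k(ℂ) → M_k(ℂ) defined by S(X) = Q T(Q⁻¹ X (Q⁻¹)*) Q*. -/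
open scoped Kronecker ComplexOrder
open Matrix

noncomputable section

/-!
Congruence `X ↦ A X Aᴴ` by an invertible `A` is a bijection of matrices carrying the corner
`P M P` onto the corner of the orthogonal projection `P'` onto `A (Im P)`. Hence the invariant
irreducible corners of `S = A T (A⁻¹ · A⁻ᴴ) Aᴴ` are exactly the images of those of `T`, with
the same spectral radii, and likewise for `S* = A⁻ᴴ T* (Aᴴ · A) A⁻¹` with `A⁻ᴴ` in place of `A`.
Ranks are preserved, and since `ker P' = (Im P')ᗮ`, the projection onto `A⁻ᴴ (Im W)` has kernel
`A (ker W)`, so the condition `ker W ⊓ Im V = ⊥` is transported as well. The solutions `W` for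
`T` and for `S` therefore correspond bijectively.
-/

section OrthProj

variable {n : Type*} [Fintype n] {A P P' V X : Matrix n n ℂ}

theorem IsOrthProj.mul_eq_self_iff (hP : IsOrthProj P) :
    P * X = X ↔ LinearMap.range X.mulVecLin ≤ LinearMap.range P.mulVecLin := by
  refine ⟨fun h => h ▸ mulVecLin_mul P X ▸ LinearMap.range_comp_le_range _ _, fun h => ?_⟩
  refine ext_iff_mulVec.2 fun x => ?_
  obtain ⟨y, hy⟩ := h ⟨x, rfl⟩
  simp only [mulVecLin_apply] at hy
  rw [← mulVec_mulVec, ← hy, mulVec_mulVec, hP.2]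

theorem IsOrthProj.mul_mul_eq_self_iff (hP : IsOrthProj P) :
    P * X * P = X ↔ LinearMap.range X.mulVecLin ≤ LinearMap.range P.mulVecLin ∧
      LinearMap.range Xᴴ.mulVecLin ≤ LinearMap.range P.mulVecLin := by
  have hXP : X * P = X ↔ P * Xᴴ = Xᴴ := by
    rw [← conjTranspose_inj, conjTranspose_mul, hP.1.eq]
  rw [← hP.mul_eq_self_iff, ← hP.mul_eq_self_iff, ← hXP]
  constructor
  · intro h
    constructor
    · rw [← h, ← Matrix.mul_assoc, ← Matrix.mul_assoc, hP.2]
    · rw [← h, Matrix.mul_assoc, hP.2]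
  · rintro ⟨hPX, hXP⟩
    rw [hPX, hXP]

theorem IsOrthProj.eq_of_range_eq (hP : IsOrthProj P) (hV : IsOrthProj V)
    (h : LinearMap.range P.mulVecLin = LinearMap.range V.mulVecLin) : P = V := by
  have hVP : V * P = P := hV.mul_eq_self_iff.2 h.le
  have hPV : P * V = V := hP.mul_eq_self_iff.2 h.ge
  rw [← hPV, ← conjTranspose_inj, conjTranspose_mul, hP.1.eq, hV.1.eq, hVP]

theorem IsOrthProj.mulVec_eq_zero_iff (hP : IsOrthProj P) {x : n → ℂ} :
    P *ᵥ x = 0 ↔ ∀ y ∈ LinearMap.range P.mulVecLin, star y ⬝ᵥ x = 0 := by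
  have hsymm : ∀ y, star (P *ᵥ y) ⬝ᵥ x = star y ⬝ᵥ (P *ᵥ x) := fun y => by
    rw [star_mulVec, hP.1.eq, ← dotProduct_mulVec]
  simp only [LinearMap.mem_range, mulVecLin_apply, forall_exists_index, forall_apply_eq_imp_iff,
    hsymm]
  exact ⟨fun h y => by rw [h, dotProduct_zero], fun h => dotProduct_star_self_eq_zero.1 (h _)⟩

theorem isOrthProj_zero : IsOrthProj (0 : Matrix n n ℂ) :=
  ⟨isHermitian_zero, Matrix.zero_mul 0⟩

theorem leavesInv_iff (hP : IsOrthProj P) {T : Matrix n n ℂ → Matrix n n ℂ} :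
    LeavesInv T P ↔ ∀ X, P * X * P = X → P * T X * P = T X := by
  refine ⟨fun h X hX => hX ▸ (h X).symm, fun h X => (h _ ?_).symm⟩
  rw [← Matrix.mul_assoc, ← Matrix.mul_assoc, hP.2, Matrix.mul_assoc, hP.2]

theorem ker_eq_comap_conjTranspose (hP : IsOrthProj P) (hP' : IsOrthProj P')
    (hPP' : LinearMap.range P'.mulVecLin = (LinearMap.range P.mulVecLin).map A.mulVecLin) :
    LinearMap.ker P'.mulVecLin = (LinearMap.ker P.mulVecLin).comap Aᴴ.mulVecLin := by
  ext x
  simp only [LinearMap.mem_ker, Submodule.mem_comap, mulVecLin_apply, hP'.mulVec_eq_zero_iff,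
    hP.mulVec_eq_zero_iff, hPP', Submodule.mem_map, forall_exists_index, and_imp,
    forall_apply_eq_imp_iff₂, star_mulVec, ← dotProduct_mulVec]

end OrthProj

section TraceAdjoint

variable {n p : Type*} [Fintype n] [Fintype p]

def IsTraceAdjoint (T : Matrix n n ℂ → Matrix p p ℂ) (Tstar : Matrix p p ℂ → Matrix n n ℂ) :
    Prop :=
  ∀ X Y, (T X * Yᴴ).trace = (X * (Tstar Y)ᴴ).trace

theorem IsTraceAdjoint.unique {T : Matrix n n ℂ → Matrix p p ℂ}
    {S₁ S₂ : Matrix p p ℂ → Matrix n n ℂ}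
    (h₁ : IsTraceAdjoint T S₁) (h₂ : IsTraceAdjoint T S₂) : S₁ = S₂ := by
  funext Y
  have h : ∀ X, (X * (S₁ Y - S₂ Y)ᴴ).trace = 0 := fun X => by
    rw [conjTranspose_sub, Matrix.mul_sub, trace_sub, ← h₁, ← h₂, sub_self]
  exact sub_eq_zero.1 (trace_mul_conjTranspose_self_eq_zero_iff.1 (h _))

end TraceAdjoint

section Congruence

variable {n : Type*} [Fintype n] [DecidableEq n] {A P P' : Matrix n n ℂ}

theorem exists_isOrthProj_range_eq (U : Submodule ℂ (n → ℂ)) :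
    ∃ P : Matrix n n ℂ, IsOrthProj P ∧ LinearMap.range P.mulVecLin = U := by
  let K : Submodule ℂ (EuclideanSpace ℂ n) :=
    U.comap (WithLp.linearEquiv 2 ℂ (n → ℂ)).toLinearMap
  have hK := isStarProjection_starProjection (U := K)
  set P := (toEuclideanCLM (n := n) (𝕜 := ℂ)).symm K.starProjection with hPdef
  have hP : ∀ y, WithLp.toLp 2 (P *ᵥ y) = K.starProjection (WithLp.toLp 2 y) := fun y => by
    rw [← toEuclideanCLM_toLp, hPdef, StarAlgEquiv.apply_symm_apply]
  refine ⟨P, ⟨?_, ?_⟩, ?_⟩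
  · exact ((toEuclideanCLM (n := n) (𝕜 := ℂ)).symm.map_star' _).symm.trans
      (congrArg _ hK.isSelfAdjoint.star_eq)
  · rw [hPdef, ← map_mul, hK.isIdempotentElem.eq]
  ext x
  constructor
  · rintro ⟨y, rfl⟩
    rw [mulVecLin_apply]
    change WithLp.toLp 2 (P *ᵥ y) ∈ K
    rw [hP]
    exact K.starProjection_apply_mem _
  · intro hx
    refine ⟨x, ?_⟩
    rw [mulVecLin_apply]
    apply (WithLp.linearEquiv 2 ℂ (n → ℂ)).symm.injective
    change WithLp.toLp 2 (P *ᵥ x) = WithLp.toLp 2 x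
    rw [hP, Submodule.starProjection_eq_self_iff]
    exact hx

theorem mulVecLin_injective_of_isUnit (hA : IsUnit A) : Function.Injective A.mulVecLin :=
  mulVec_injective_iff_isUnit.2 hA

theorem exists_isOrthProj_map_range_eq (hA : IsUnit A) (U : Submodule ℂ (n → ℂ)) :
    ∃ P : Matrix n n ℂ, IsOrthProj P ∧ U = (LinearMap.range P.mulVecLin).map A.mulVecLin := by
  obtain ⟨P, hP, hPU⟩ := exists_isOrthProj_range_eq (U.map A⁻¹.mulVecLin)
  refine ⟨P, hP, ?_⟩
  rw [hPU, ← Submodule.map_comp, ← mulVecLin_mul,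
    mul_nonsing_inv _ ((isUnit_iff_isUnit_det A).1 hA), mulVecLin_one, Submodule.map_id]

theorem map_mulVecLin_eq_comap (hA : IsUnit A) (U : Submodule ℂ (n → ℂ)) :
    U.map A.mulVecLin = U.comap A⁻¹.mulVecLin := by
  have hd := (isUnit_iff_isUnit_det A).1 hA
  ext x
  constructor
  · rintro ⟨y, hy, rfl⟩
    simpa [mulVec_mulVec, nonsing_inv_mul _ hd] using hy
  · exact fun hx => ⟨A⁻¹ *ᵥ x, hx, by simp [mulVec_mulVec, mul_nonsing_inv _ hd]⟩

theorem rank_eq_of_range_eq_map (hA : IsUnit A)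
    (h : LinearMap.range P'.mulVecLin = (LinearMap.range P.mulVecLin).map A.mulVecLin) :
    P'.rank = P.rank := by
  rw [Matrix.rank, Matrix.rank, h]
  exact (Submodule.equivMapOfInjective _ (mulVecLin_injective_of_isUnit hA) _).finrank_eq.symm

theorem range_mul_mul_conjTranspose (hA : IsUnit A) (X : Matrix n n ℂ) :
    LinearMap.range (A * X * Aᴴ).mulVecLin = (LinearMap.range X.mulVecLin).map A.mulVecLin := by
  have hAH : LinearMap.range Aᴴ.mulVecLin = ⊤ :=
    LinearMap.range_eq_top.2 (mulVec_surjective_iff_isUnit.2 ((isUnit_conjTranspose A).2 hA))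
  rw [mulVecLin_mul, mulVecLin_mul, LinearMap.range_comp, hAH, Submodule.map_top,
    LinearMap.range_comp]

theorem nonsing_inv_mul_mul_conjTranspose_cancel (hA : IsUnit A) (X : Matrix n n ℂ) :
    A⁻¹ * (A * X * Aᴴ) * A⁻¹ᴴ = X := by
  have hd := (isUnit_iff_isUnit_det A).1 hA
  rw [Matrix.mul_assoc, Matrix.mul_assoc, Matrix.mul_assoc, ← conjTranspose_mul,
    nonsing_inv_mul _ hd, conjTranspose_one, Matrix.mul_one, nonsing_inv_mul_cancel_left _ _ hd]

theorem mul_nonsing_inv_mul_conjTranspose_cancel (hA : IsUnit A) (X : Matrix n n ℂ) :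
    A * (A⁻¹ * X * A⁻¹ᴴ) * Aᴴ = X := by
  simpa only [nonsing_inv_nonsing_inv _ ((isUnit_iff_isUnit_det A).1 hA)] using
    nonsing_inv_mul_mul_conjTranspose_cancel (isUnit_nonsing_inv_iff.2 hA) X

theorem bijective_mul_mul_conjTranspose (hA : IsUnit A) :
    Function.Bijective fun X : Matrix n n ℂ => A * X * Aᴴ :=
  ⟨Function.LeftInverse.injective (g := fun X => A⁻¹ * X * A⁻¹ᴴ)
      (nonsing_inv_mul_mul_conjTranspose_cancel hA),
    Function.RightInverse.surjective (g := fun X => A⁻¹ * X * A⁻¹ᴴ)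
      (mul_nonsing_inv_mul_conjTranspose_cancel hA)⟩

def conjBy (A : Matrix n n ℂ) (T : Matrix n n ℂ → Matrix n n ℂ) (X : Matrix n n ℂ) :
    Matrix n n ℂ := A * T (A⁻¹ * X * A⁻¹ᴴ) * Aᴴ

theorem conjBy_mul_mul_conjTranspose (hA : IsUnit A) (T : Matrix n n ℂ → Matrix n n ℂ)
    (X : Matrix n n ℂ) : conjBy A T (A * X * Aᴴ) = A * T X * Aᴴ := by
  rw [conjBy, nonsing_inv_mul_mul_conjTranspose_cancel hA]

theorem conjBy_nonsing_inv_conjBy (hA : IsUnit A) (T : Matrix n n ℂ → Matrix n n ℂ) :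
    conjBy A⁻¹ (conjBy A T) = T := by
  funext X
  change A⁻¹ * conjBy A T (A⁻¹⁻¹ * X * A⁻¹⁻¹ᴴ) * A⁻¹ᴴ = T X
  rw [nonsing_inv_nonsing_inv _ ((isUnit_iff_isUnit_det A).1 hA), conjBy_mul_mul_conjTranspose hA,
    nonsing_inv_mul_mul_conjTranspose_cancel hA]

theorem IsTraceAdjoint.conjBy {T Tstar : Matrix n n ℂ → Matrix n n ℂ} (hA : IsUnit A)
    (h : IsTraceAdjoint T Tstar) : IsTraceAdjoint (conjBy A T) (conjBy A⁻¹ᴴ Tstar) := by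
  intro X Y
  have hinv : A⁻¹ᴴ⁻¹ = Aᴴ := by
    rw [← conjTranspose_nonsing_inv, nonsing_inv_nonsing_inv _ ((isUnit_iff_isUnit_det A).1 hA)]
  simp only [_root_.conjBy, hinv, conjTranspose_conjTranspose]
  calc (A * T (A⁻¹ * X * A⁻¹ᴴ) * Aᴴ * Yᴴ).trace
      = (T (A⁻¹ * X * A⁻¹ᴴ) * (Aᴴ * Y * A)ᴴ).trace := by
        simp only [conjTranspose_mul, conjTranspose_conjTranspose, Matrix.mul_assoc]
        rw [trace_mul_comm A]
        simp only [Matrix.mul_assoc]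
    _ = (A⁻¹ * X * A⁻¹ᴴ * (Tstar (Aᴴ * Y * A))ᴴ).trace := h _ _
    _ = (X * (A⁻¹ᴴ * Tstar (Aᴴ * Y * A) * A⁻¹)ᴴ).trace := by
        simp only [conjTranspose_mul, conjTranspose_conjTranspose, Matrix.mul_assoc]
        rw [trace_mul_comm A⁻¹]
        simp only [Matrix.mul_assoc]

theorem mul_mul_conjTranspose_corner_iff (hA : IsUnit A) (hP : IsOrthProj P)
    (hP' : IsOrthProj P')
    (hPP' : LinearMap.range P'.mulVecLin = (LinearMap.range P.mulVecLin).map A.mulVecLin)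
    (X : Matrix n n ℂ) : P' * (A * X * Aᴴ) * P' = A * X * Aᴴ ↔ P * X * P = X := by
  have hXH : (A * X * Aᴴ)ᴴ = A * Xᴴ * Aᴴ := by
    simp only [conjTranspose_mul, conjTranspose_conjTranspose, Matrix.mul_assoc]
  rw [hP'.mul_mul_eq_self_iff, hP.mul_mul_eq_self_iff, hXH, range_mul_mul_conjTranspose hA,
    range_mul_mul_conjTranspose hA, hPP',
    Submodule.map_le_map_iff_of_injective (mulVecLin_injective_of_isUnit hA),
    Submodule.map_le_map_iff_of_injective (mulVecLin_injective_of_isUnit hA)]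

theorem leavesInv_conjBy_iff (hA : IsUnit A) (hP : IsOrthProj P) (hP' : IsOrthProj P')
    (hPP' : LinearMap.range P'.mulVecLin = (LinearMap.range P.mulVecLin).map A.mulVecLin)
    {T : Matrix n n ℂ → Matrix n n ℂ} : LeavesInv (conjBy A T) P' ↔ LeavesInv T P := by
  rw [leavesInv_iff hP', leavesInv_iff hP, (bijective_mul_mul_conjTranspose hA).surjective.forall]
  simp only [conjBy_mul_mul_conjTranspose hA, mul_mul_conjTranspose_corner_iff hA hP hP' hPP']

theorem hasSpecRadOn_conjBy_iff (hA : IsUnit A) (hP : IsOrthProj P) (hP' : IsOrthProj P')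
    (hPP' : LinearMap.range P'.mulVecLin = (LinearMap.range P.mulVecLin).map A.mulVecLin)
    {T : Matrix n n ℂ → Matrix n n ℂ} {l : ℝ} :
    HasSpecRadOn (conjBy A T) P' l ↔ HasSpecRadOn T P l := by
  have hbij := bijective_mul_mul_conjTranspose hA
  have hne : ∀ X : Matrix n n ℂ, A * X * Aᴴ ≠ 0 ↔ X ≠ 0 := fun X =>
    hbij.injective.ne_iff' (by simp)
  have heig : ∀ (μ : ℂ) X, A * T X * Aᴴ = μ • (A * X * Aᴴ) ↔ T X = μ • X := by
    intro μ X
    rw [show μ • (A * X * Aᴴ) = A * (μ • X) * Aᴴ by rw [Matrix.mul_smul, Matrix.smul_mul]]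
    exact hbij.injective.eq_iff
  refine and_congr
    (exists_congr fun μ => hbij.surjective.exists.trans (exists_congr fun X => ?_))
    (forall_congr' fun μ => hbij.surjective.forall.trans (forall_congr' fun X => ?_)) <;>
  simp only [hne, mul_mul_conjTranspose_corner_iff hA hP hP' hPP',
    conjBy_mul_mul_conjTranspose hA, heig]

theorem IsIrredOn.conjBy (hA : IsUnit A) (hP' : IsOrthProj P')
    (hPP' : LinearMap.range P'.mulVecLin = (LinearMap.range P.mulVecLin).map A.mulVecLin)
    {T : Matrix n n ℂ → Matrix n n ℂ} (h : IsIrredOn T P) : IsIrredOn (conjBy A T) P' := by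
  intro V' hV' hle hinv
  obtain ⟨V, hV, hVV'⟩ := exists_isOrthProj_map_range_eq hA (LinearMap.range V'.mulVecLin)
  rw [hVV', hPP', Submodule.map_le_map_iff_of_injective (mulVecLin_injective_of_isUnit hA)] at hle
  rw [leavesInv_conjBy_iff hA hV hV' hVV'] at hinv
  refine (h V hV hle hinv).imp (fun hVP => hV'.eq_of_range_eq hP' ?_)
    (fun hV0 => hV'.eq_of_range_eq isOrthProj_zero ?_)
  · rw [hVV', hPP', hVP]
  · simp [hVV', hV0]

theorem isIrredOn_conjBy_iff (hA : IsUnit A) (hP : IsOrthProj P) (hP' : IsOrthProj P')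
    (hPP' : LinearMap.range P'.mulVecLin = (LinearMap.range P.mulVecLin).map A.mulVecLin)
    {T : Matrix n n ℂ → Matrix n n ℂ} : IsIrredOn (conjBy A T) P' ↔ IsIrredOn T P := by
  refine ⟨fun h => ?_, IsIrredOn.conjBy hA hP' hPP'⟩
  have hP'P :
      LinearMap.range P.mulVecLin = (LinearMap.range P'.mulVecLin).map A⁻¹.mulVecLin := by
    rw [map_mulVecLin_eq_comap (isUnit_nonsing_inv_iff.2 hA), hPP',
      nonsing_inv_nonsing_inv _ ((isUnit_iff_isUnit_det A).1 hA),
      Submodule.comap_map_eq_of_injective (mulVecLin_injective_of_isUnit hA)]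
  simpa only [conjBy_nonsing_inv_conjBy hA] using
    h.conjBy (isUnit_nonsing_inv_iff.2 hA) hP hP'P

theorem ker_inf_range_eq_bot_iff (hA : IsUnit A) {V V' W W' : Matrix n n ℂ}
    (hVV' : LinearMap.range V'.mulVecLin = (LinearMap.range V.mulVecLin).map A.mulVecLin)
    (hW : IsOrthProj W) (hW' : IsOrthProj W')
    (hWW' : LinearMap.range W'.mulVecLin = (LinearMap.range W.mulVecLin).map A⁻¹ᴴ.mulVecLin) :
    LinearMap.ker W'.mulVecLin ⊓ LinearMap.range V'.mulVecLin = ⊥ ↔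
      LinearMap.ker W.mulVecLin ⊓ LinearMap.range V.mulVecLin = ⊥ := by
  have hinj := mulVecLin_injective_of_isUnit hA
  rw [ker_eq_comap_conjTranspose hW hW' hWW', conjTranspose_conjTranspose,
    ← map_mulVecLin_eq_comap hA, hVV', ← Submodule.map_inf _ hinj,
    (Submodule.map_injective_of_injective hinj).eq_iff' (Submodule.map_bot _)]

theorem solution_conjBy_iff (hA : IsUnit A) {Tstar : Matrix n n ℂ → Matrix n n ℂ} {l : ℝ}
    {V V' W W' : Matrix n n ℂ}
    (hVV' : LinearMap.range V'.mulVecLin = (LinearMap.range V.mulVecLin).map A.mulVecLin)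
    (hW : IsOrthProj W) (hW' : IsOrthProj W')
    (hWW' : LinearMap.range W'.mulVecLin = (LinearMap.range W.mulVecLin).map A⁻¹ᴴ.mulVecLin) :
    (LeavesInv (conjBy A⁻¹ᴴ Tstar) W' ∧ IsIrredOn (conjBy A⁻¹ᴴ Tstar) W' ∧
        HasSpecRadOn (conjBy A⁻¹ᴴ Tstar) W' l ∧ W'.rank = V'.rank ∧
        LinearMap.ker W'.mulVecLin ⊓ LinearMap.range V'.mulVecLin = ⊥) ↔
      (LeavesInv Tstar W ∧ IsIrredOn Tstar W ∧ HasSpecRadOn Tstar W l ∧ W.rank = V.rank ∧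
        LinearMap.ker W.mulVecLin ⊓ LinearMap.range V.mulVecLin = ⊥) := by
  have hB : IsUnit A⁻¹ᴴ := (isUnit_conjTranspose _).2 (isUnit_nonsing_inv_iff.2 hA)
  rw [leavesInv_conjBy_iff hB hW hW' hWW', isIrredOn_conjBy_iff hB hW hW' hWW',
    hasSpecRadOn_conjBy_iff hB hW hW' hWW', rank_eq_of_range_eq_map hB hWW',
    rank_eq_of_range_eq_map hA hVV', ker_inf_range_eq_bot_iff hA hVV' hW hW' hWW']

theorem UniqueWProp.conjBy (hA : IsUnit A) {T Tstar : Matrix n n ℂ → Matrix n n ℂ}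
    (h : UniqueWProp T Tstar) : UniqueWProp (conjBy A T) (conjBy A⁻¹ᴴ Tstar) := by
  intro V' l hV' hinv hirr hrad
  obtain ⟨V, hV, hVV'⟩ := exists_isOrthProj_map_range_eq hA (LinearMap.range V'.mulVecLin)
  rw [leavesInv_conjBy_iff hA hV hV' hVV'] at hinv
  rw [isIrredOn_conjBy_iff hA hV hV' hVV'] at hirr
  rw [hasSpecRadOn_conjBy_iff hA hV hV' hVV'] at hrad
  obtain ⟨W, ⟨hW, hWsol⟩, huniq⟩ := h V l hV hinv hirr hrad
  have hB : IsUnit A⁻¹ᴴ := (isUnit_conjTranspose _).2 (isUnit_nonsing_inv_iff.2 hA)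
  obtain ⟨W', hW', hWW'⟩ :=
    exists_isOrthProj_range_eq ((LinearMap.range W.mulVecLin).map A⁻¹ᴴ.mulVecLin)
  refine ⟨W', ⟨hW', (solution_conjBy_iff hA hVV' hW hW' hWW').2 hWsol⟩, ?_⟩
  rintro W'' ⟨hW'', hW''sol⟩
  obtain ⟨W₂, hW₂, hW₂W''⟩ := exists_isOrthProj_map_range_eq hB (LinearMap.range W''.mulVecLin)
  obtain rfl : W₂ = W :=
    huniq W₂ ⟨hW₂, (solution_conjBy_iff hA hVV' hW₂ hW'' hW₂W'').1 hW''sol⟩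
  exact hW''.eq_of_range_eq hW' (hW₂W''.trans hWW'.symm)

end Congruence

theorem stmt3_general {k : ℕ}
    (T Tstar : Matrix (Fin k) (Fin k) ℂ → Matrix (Fin k) (Fin k) ℂ)
    (hadj : ∀ X Y : Matrix (Fin k) (Fin k) ℂ,
      (T X * Yᴴ).trace = (X * (Tstar Y)ᴴ).trace)
    (Q : Matrix (Fin k) (Fin k) ℂ) (hQ : IsUnit Q)
    (hprop : UniqueWProp T Tstar)
    (Sstar : Matrix (Fin k) (Fin k) ℂ → Matrix (Fin k) (Fin k) ℂ)
    (hSadj : ∀ X Y : Matrix (Fin k) (Fin k) ℂ,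
      ((Q * T (Q⁻¹ * X * (Q⁻¹)ᴴ) * Qᴴ) * Yᴴ).trace = (X * (Sstar Y)ᴴ).trace) :
    UniqueWProp (fun X => Q * T (Q⁻¹ * X * (Q⁻¹)ᴴ) * Qᴴ) Sstar := by
  obtain rfl : Sstar = conjBy Q⁻¹ᴴ Tstar :=
    IsTraceAdjoint.unique (T := conjBy Q T) hSadj (IsTraceAdjoint.conjBy hQ hadj)
  exact hprop.conjBy hQ

/-- Lemma 6: the unique-`W` property (item 3 of the main theorem) is preserved
under the equivalence `S(X) = Q T(Q⁻¹ X (Q⁻¹)^*) Q^*` for an invertible `Q`. -/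
theorem stmt3 {k : ℕ}
    (T Tstar : Matrix (Fin k) (Fin k) ℂ → Matrix (Fin k) (Fin k) ℂ)
    (hlin : IsLinearMap ℂ T) (hpos : IsPosMap T)
    (hadj : ∀ X Y : Matrix (Fin k) (Fin k) ℂ,
      (T X * Yᴴ).trace = (X * (Tstar Y)ᴴ).trace)
    (Q : Matrix (Fin k) (Fin k) ℂ) (hQ : IsUnit Q)
    (hprop : UniqueWProp T Tstar)
    (Sstar : Matrix (Fin k) (Fin k) ℂ → Matrix (Fin k) (Fin k) ℂ)
    (hSadj : ∀ X Y : Matrix (Fin k) (Fin k) ℂ,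
      ((Q * T (Q⁻¹ * X * (Q⁻¹)ᴴ) * Qᴴ) * Yᴴ).trace = (X * (Sstar Y)ᴴ).trace) :
    UniqueWProp (fun X => Q * T (Q⁻¹ * X * (Q⁻¹)ᴴ) * Qᴴ) Sstar :=
  stmt3_general T Tstar hadj Q hQ hprop Sstar hSadj

end
end

section
/- Let B ∈ M_k(ℂ)⊗M_k(ℂ) ≅ M_{k²}(ℂ) be a positive semidefinite Hermitian matrix. Suppose there is a vector v ∈ Im(B) ⊆ ℂ^k⊗ℂ^k with tensor rank k. Then there is an invertible matrix P ∈ M_k(ℂ) such that, setting A = (P⊗Id)B(P⊗Id)*, one has Im(G_A(X^t)) ⊇ Im(X) for every positive semidefinite X ∈ M_k(ℂ). -/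
open scoped Kronecker ComplexOrder
open Matrix

noncomputable section

/-!
Write `v = B w` and `F = F(v)`. With `S = √B` and `u = S w` we have `v = S u`, hence
`v v* = S (u u*) S ≤ ‖u‖² S² = ‖u‖² B`. Conjugating by `F⁻¹ ⊗ Id` and applying the positive
map `C ↦ G_C(Xᵀ)` (positive because `G_C((x x*)ᵀ) = K* C K` with `K = x̄ ⊗ Id`) gives
`X = G_{(F⁻¹ ⊗ Id) v v* (F⁻¹ ⊗ Id)*}(Xᵀ) ≤ ‖u‖² G_A(Xᵀ)` for `A = (F⁻¹ ⊗ Id) B (F⁻¹ ⊗ Id)*`,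
and `X ≤ c Y` between positive semidefinite matrices forces `ker Y ⊆ ker X`, i.e. `Im X ⊆ Im Y`.
-/

namespace Matrix

variable {𝕜 n : Type*} [RCLike 𝕜] [Fintype n] [DecidableEq n]

theorem IsHermitian.range_mulVecLin_le_of_ker_le {A B : Matrix n n 𝕜}
    (hA : A.IsHermitian) (hB : B.IsHermitian)
    (h : LinearMap.ker B.mulVecLin ≤ LinearMap.ker A.mulVecLin) :
    LinearMap.range A.mulVecLin ≤ LinearMap.range B.mulVecLin := by
  let e : (n → 𝕜) ≃ₗ[𝕜] EuclideanSpace 𝕜 n := (WithLp.linearEquiv 2 𝕜 (n → 𝕜)).symm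
  have hrange (M : Matrix n n 𝕜) :
      LinearMap.range M.mulVecLin = (LinearMap.range (toEuclideanLin M)).comap e.toLinearMap := by
    ext x
    exact ⟨fun ⟨y, hy⟩ => ⟨e y, by simp [e, ← hy]⟩,
      fun ⟨y, hy⟩ => ⟨WithLp.ofLp y, by simpa [e] using congrArg WithLp.ofLp hy⟩⟩
  have hker (M : Matrix n n 𝕜) :
      LinearMap.ker M.mulVecLin = (LinearMap.ker (toEuclideanLin M)).comap e.toLinearMap := by
    ext x
    simp [e]
  have hsymm (M : Matrix n n 𝕜) (hM : M.IsHermitian) :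
      LinearMap.range (toEuclideanLin M) = (LinearMap.ker (toEuclideanLin M))ᗮ := by
    rw [← (isSymmetric_toEuclideanLin_iff.mpr hM).orthogonal_range,
      Submodule.orthogonal_orthogonal]
  rw [hrange, hrange, hsymm A hA, hsymm B hB]
  refine Submodule.comap_mono (Submodule.orthogonal_le ?_)
  rwa [hker, hker, Submodule.comap_le_comap_iff_of_surjective e.surjective] at h

theorem PosSemidef.range_mulVecLin_le_of_sub_posSemidef {A B : Matrix n n 𝕜}
    (hA : A.PosSemidef) (hB : B.PosSemidef) {c : 𝕜} (h : (c • B - A).PosSemidef) :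
    LinearMap.range A.mulVecLin ≤ LinearMap.range B.mulVecLin := by
  refine hA.isHermitian.range_mulVecLin_le_of_ker_le hB.isHermitian fun x hx => ?_
  rw [LinearMap.mem_ker, mulVecLin_apply] at hx ⊢
  have hle : star x ⬝ᵥ A *ᵥ x ≤ 0 := by
    simpa [sub_mulVec, smul_mulVec, hx] using h.dotProduct_mulVec_nonneg x
  exact (hA.dotProduct_mulVec_zero_iff x).mp
    (le_antisymm hle (hA.dotProduct_mulVec_nonneg x))

theorem posSemidef_dotProduct_smul_one_sub_vecMulVec (u : n → 𝕜) :
    ((star u ⬝ᵥ u) • (1 : Matrix n n 𝕜) - vecMulVec u (star u)).PosSemidef := by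
  have hself : star (star u ⬝ᵥ u) = star u ⬝ᵥ u := by
    simp [dotProduct, mul_comm]
  refine .of_dotProduct_mulVec_nonneg ?_ fun y => ?_
  · exact (isHermitian_one.smul hself).sub (posSemidef_vecMulVec_self_star u).isHermitian
  · have hnorm (x : n → 𝕜) : star x ⬝ᵥ x = (‖WithLp.toLp 2 x‖ : 𝕜) ^ 2 := by
      rw [dotProduct_comm, ← EuclideanSpace.inner_toLp_toLp, inner_self_eq_norm_sq_to_K]
    have hconj : star u ⬝ᵥ y = star (star y ⬝ᵥ u) := by
      simp [dotProduct, mul_comm]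
    have hcs : ‖star y ⬝ᵥ u‖ ≤ ‖WithLp.toLp 2 u‖ * ‖WithLp.toLp 2 y‖ := by
      simpa [EuclideanSpace.inner_toLp_toLp, dotProduct_comm, mul_comm] using
        norm_inner_le_norm (𝕜 := 𝕜) (WithLp.toLp 2 y) (WithLp.toLp 2 u)
    rw [sub_mulVec, smul_mulVec, one_mulVec, vecMulVec_mulVec, dotProduct_sub, dotProduct_smul,
      dotProduct_smul, op_smul_eq_mul, hconj, RCLike.star_def, RCLike.mul_conj, hnorm, hnorm,
      smul_eq_mul, sub_nonneg, ← mul_pow]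
    exact_mod_cast pow_le_pow_left₀ (norm_nonneg _) hcs 2

open scoped MatrixOrder in
theorem PosSemidef.exists_smul_sub_vecMulVec_posSemidef {B : Matrix n n 𝕜} (hB : B.PosSemidef)
    {v : n → 𝕜} (hv : v ∈ LinearMap.range B.mulVecLin) :
    ∃ c : 𝕜, (c • B - vecMulVec v (star v)).PosSemidef := by
  obtain ⟨w, rfl⟩ := hv
  set S := CFC.sqrt B
  have hSS : S * S = B := CFC.sqrt_mul_sqrt_self B hB.nonneg
  have hSh : Sᴴ = S := (CFC.sqrt_nonneg B).posSemidef.isHermitian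
  set u := S *ᵥ w
  have hv : B.mulVecLin w = S *ᵥ u := by rw [mulVecLin_apply, mulVec_mulVec, hSS]
  refine ⟨star u ⬝ᵥ u, ?_⟩
  convert (posSemidef_dotProduct_smul_one_sub_vecMulVec u).mul_mul_conjTranspose_same S using 1
  rw [hv, star_mulVec S u, Matrix.mul_sub, Matrix.sub_mul, mul_vecMulVec, vecMulVec_mul,
    Matrix.mul_smul, Matrix.smul_mul, Matrix.mul_one, hSh, hSS]

end Matrix

section Gmap

variable {n p : Type*} [Fintype n] [Fintype p]

theorem gmap_sub_left (A C : Matrix (n × p) (n × p) ℂ) (X : Matrix n n ℂ) :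
    Gmap (A - C) X = Gmap A X - Gmap C X := by
  ext j j'
  simp [Gmap, mul_sub, Finset.sum_sub_distrib]

theorem gmap_smul_left (c : ℂ) (A : Matrix (n × p) (n × p) ℂ) (X : Matrix n n ℂ) :
    Gmap (c • A) X = c • Gmap A X := by
  ext j j'
  simp [Gmap, Finset.mul_sum, mul_left_comm]

theorem gmap_sum_right {ι : Type*} (s : Finset ι) (A : Matrix (n × p) (n × p) ℂ)
    (X : ι → Matrix n n ℂ) : Gmap A (∑ t ∈ s, X t) = ∑ t ∈ s, Gmap A (X t) := by
  ext j j'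
  simp only [Gmap, of_apply, Matrix.sum_apply, Finset.sum_mul]
  exact Finset.sum_comm_cycle

theorem gmap_conjTranspose_left (A : Matrix (n × p) (n × p) ℂ) (X : Matrix n n ℂ) :
    Gmap Aᴴ X = (Gmap A Xᴴ)ᴴ := by
  ext j j'
  simp only [Gmap, conjTranspose_apply, of_apply, star_sum, star_mul', star_star]
  exact Finset.sum_comm

theorem gmap_kronecker_one_mul [DecidableEq p] (P : Matrix n n ℂ)
    (C : Matrix (n × p) (n × p) ℂ) (X : Matrix n n ℂ) :
    Gmap ((P ⊗ₖ (1 : Matrix p p ℂ)) * C) X = Gmap C (X * P) := by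
  ext j j'
  simp only [Gmap, of_apply, mul_apply, kroneckerMap_apply, one_apply, mul_ite, mul_one, mul_zero,
    ite_mul, zero_mul, Fintype.sum_prod_type, Finset.sum_ite_eq, Finset.mem_univ, if_true,
    Finset.mul_sum, Finset.sum_mul]
  refine Finset.sum_congr rfl fun _ _ => ?_
  rw [Finset.sum_comm]
  simp only [mul_assoc]

theorem gmap_vecMulVec (v : n × p → ℂ) (Y : Matrix n n ℂ) :
    Gmap (vecMulVec v (star v)) Y
      = (Matrix.of fun i j => v (i, j))ᵀ * Yᵀ * ((Matrix.of fun i j => v (i, j))ᴴ)ᵀ := by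
  ext j j'
  simp only [Gmap, of_apply, mul_apply, vecMulVec_apply, transpose_apply, conjTranspose_apply,
    Pi.star_apply, Finset.sum_mul]
  exact Finset.sum_congr rfl fun _ _ => Finset.sum_congr rfl fun _ _ => by ring

theorem gmap_vecMulVec_transpose [DecidableEq p] (C : Matrix (n × p) (n × p) ℂ) (x : n → ℂ) :
    Gmap C (vecMulVec x (star x))ᵀ =
      (Matrix.of fun (q : n × p) j => star (x q.1) * (1 : Matrix p p ℂ) q.2 j)ᴴ * C *
        Matrix.of fun (q : n × p) j => star (x q.1) * (1 : Matrix p p ℂ) q.2 j := by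
  ext j j'
  simp only [Gmap, of_apply, mul_apply, transpose_apply, conjTranspose_apply, vecMulVec_apply,
    Pi.star_apply, star_star, one_apply, mul_ite, mul_one, mul_zero, apply_ite star, star_zero,
    ite_mul, zero_mul, Fintype.sum_prod_type, Finset.sum_ite_eq', Finset.mem_univ, if_true,
    Finset.sum_mul]
  exact Finset.sum_congr rfl fun _ _ => Finset.sum_congr rfl fun _ _ => by ring

theorem gmap_kronecker_one_mul_mul [DecidableEq p] (P Q : Matrix n n ℂ)
    (C : Matrix (n × p) (n × p) ℂ) (X : Matrix n n ℂ) :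
    Gmap ((P ⊗ₖ (1 : Matrix p p ℂ)) * C * (Q ⊗ₖ (1 : Matrix p p ℂ))ᴴ) X
      = Gmap C (Qᴴ * X * P) := by
  have h : (P ⊗ₖ (1 : Matrix p p ℂ)) * C * (Q ⊗ₖ (1 : Matrix p p ℂ))ᴴ
      = ((Q ⊗ₖ (1 : Matrix p p ℂ)) * ((P ⊗ₖ (1 : Matrix p p ℂ)) * C)ᴴ)ᴴ := by
    simp [conjTranspose_mul]
  rw [h, gmap_conjTranspose_left, gmap_kronecker_one_mul, gmap_conjTranspose_left,
    conjTranspose_conjTranspose, gmap_kronecker_one_mul, conjTranspose_mul,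
    conjTranspose_conjTranspose, Matrix.mul_assoc]

theorem Matrix.PosSemidef.gmap_transpose {C : Matrix (n × p) (n × p) ℂ} (hC : C.PosSemidef)
    {X : Matrix n n ℂ} (hX : X.PosSemidef) : (Gmap C Xᵀ).PosSemidef := by
  classical
  obtain ⟨m, x, rfl⟩ := posSemidef_iff_eq_sum_vecMulVec.mp hX
  rw [transpose_sum, gmap_sum_right]
  exact posSemidef_sum _ fun s _ => by
    rw [gmap_vecMulVec_transpose]
    exact hC.conjTranspose_mul_mul_same _

end Gmap

/-- Lemma 7: if `B ∈ M_k ⊗ M_k` is positive semidefinite and its range contains a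
vector of tensor rank `k`, then there is an invertible `P` such that, for
`A = (P ⊗ Id) B (P ⊗ Id)^*`, one has `Im(G_A(Xᵗ)) ⊇ Im(X)` for every positive
semidefinite `X`. -/
theorem stmt4 {k : ℕ} (B : Matrix (Fin k × Fin k) (Fin k × Fin k) ℂ)
    (hB : B.PosSemidef) (v : Fin k × Fin k → ℂ)
    (hv : v ∈ LinearMap.range B.mulVecLin)
    (hrank : IsUnit (Matrix.of fun i j => v (i, j) : Matrix (Fin k) (Fin k) ℂ)) :
    ∃ P : Matrix (Fin k) (Fin k) ℂ, IsUnit P ∧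
      ∀ X : Matrix (Fin k) (Fin k) ℂ, X.PosSemidef →
        LinearMap.range X.mulVecLin ≤
          LinearMap.range (Gmap ((P ⊗ₖ (1 : Matrix (Fin k) (Fin k) ℂ)) * B *
            (P ⊗ₖ (1 : Matrix (Fin k) (Fin k) ℂ))ᴴ) Xᵀ).mulVecLin := by
  set F : Matrix (Fin k) (Fin k) ℂ := Matrix.of fun i j => v (i, j)
  have hFF : F⁻¹ * F = 1 := nonsing_inv_mul F ((isUnit_iff_isUnit_det F).mp hrank)
  obtain ⟨c, hc⟩ := hB.exists_smul_sub_vecMulVec_posSemidef hv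
  refine ⟨F⁻¹, isUnit_nonsing_inv_iff.mpr hrank, fun X hX => ?_⟩
  set K := F⁻¹ ⊗ₖ (1 : Matrix (Fin k) (Fin k) ℂ)
  have hvv : Gmap (K * vecMulVec v (star v) * Kᴴ) Xᵀ = X := by
    rw [gmap_kronecker_one_mul_mul, gmap_vecMulVec, show (of fun i j => v (i, j)) = F from rfl]
    simp only [← transpose_mul, ← Matrix.mul_assoc]
    rw [Matrix.mul_assoc _ F⁻¹ F, hFF, ← conjTranspose_mul, hFF]
    simp
  have hdom : (c • Gmap (K * B * Kᴴ) Xᵀ - X).PosSemidef := by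
    have h := (hc.mul_mul_conjTranspose_same K).gmap_transpose hX
    rwa [Matrix.mul_sub, Matrix.sub_mul, Matrix.mul_smul, Matrix.smul_mul, gmap_sub_left,
      gmap_smul_left, hvv] at h
  exact hX.range_mulVecLin_le_of_sub_posSemidef
    ((hB.mul_mul_conjTranspose_same K).gmap_transpose hX) hdom
end
end

section
/- Let B = Σ_{i=1}^n C_i⊗D_i ∈ M_k(ℂ)⊗M_m(ℂ) and define B̃ ∈ M_{mk}(ℂ)⊗M_{mk}(ℂ) by B̃ = Σ_{i=1}^n (Id_m⊗C_i)⊗(D_i⊗Id_k), where M_m⊗M_k ≅ M_{mk}. Then for every matrix M = Σ_{i,j=1}^m e_i e_j^t ⊗ B_{ij} ∈ M_m⊗M_k (with e_1,…,e_m the canonical basis of ℂ^m and B_{ij} ∈ M_k(ℂ)): G_{B̃}(M^t) = G_B( (Σ_{i=1}^m B_{ii})^t ) ⊗ Id_k, i.e., G_{B̃}(Σ_{i,j} e_j e_i^t ⊗ B_{ij}^t) = G_B(Σ_i B_{ii}^t) ⊗ Id_k. -/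
open scoped Kronecker ComplexOrder
open Matrix

noncomputable section

/-! `G_A` is linear in `A` and `G_{C ⊗ D}(X) = tr(X C) • D`, so both sides are sums over `i`
of multiples of `Dᵢ ⊗ 1`. The coefficients agree because `tr(M (1 ⊗ C))` sees only the diagonal
blocks of `M`: it equals `tr((Σᵢ Nᵢᵢ) C)` for `M = Σᵢⱼ eⱼeᵢᵗ ⊗ Nᵢⱼ`. -/

theorem Matrix.sum_kronecker {ι l m n p R : Type*} [NonUnitalNonAssocSemiring R] (s : Finset ι)
    (A : ι → Matrix l m R) (B : Matrix n p R) :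
    (∑ i ∈ s, A i) ⊗ₖ B = ∑ i ∈ s, A i ⊗ₖ B := by
  ext
  simp only [kroneckerMap_apply, Matrix.sum_apply, Finset.sum_mul]

theorem Matrix.trace_sum_single_kronecker_mul_one_kronecker {m k R : Type*}
    [Fintype m] [Fintype k] [DecidableEq m] [CommSemiring R]
    (N : m → m → Matrix k k R) (C : Matrix k k R) :
    ((∑ i, ∑ j, single j i (1 : R) ⊗ₖ N i j) * (1 ⊗ₖ C)).trace = ((∑ i, N i i) * C).trace := by
  simp only [Finset.sum_mul, trace_sum, ← mul_kronecker_mul, trace_kronecker, mul_one]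
  refine Finset.sum_congr rfl fun i _ => ?_
  rw [Finset.sum_eq_single i (fun j _ hji => by simp [hji]) (by simp), trace_single_eq_same,
    one_mul]

theorem gmap_sum {ι n p : Type*} [Fintype n] [Fintype p] (s : Finset ι)
    (A : ι → Matrix (n × p) (n × p) ℂ) (X : Matrix n n ℂ) :
    Gmap (∑ i ∈ s, A i) X = ∑ i ∈ s, Gmap (A i) X := by
  ext
  simp only [Gmap, of_apply, Matrix.sum_apply, Finset.mul_sum]
  exact (Finset.sum_congr rfl fun _ _ => Finset.sum_comm).trans Finset.sum_comm

theorem gmap_kronecker {n p : Type*} [Fintype n] [Fintype p]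
    (C : Matrix n n ℂ) (D : Matrix p p ℂ) (X : Matrix n n ℂ) :
    Gmap (C ⊗ₖ D) X = (X * C).trace • D := by
  ext
  simp only [Gmap, of_apply, kroneckerMap_apply, Matrix.smul_apply, smul_eq_mul, trace, diag,
    mul_apply, Finset.sum_mul, mul_assoc]

/-- The computation in the proof of Lemma 14: for `B = Σ Cᵢ ⊗ Dᵢ ∈ M_k ⊗ M_m`,
`B̃ = Σ (Id_m ⊗ Cᵢ) ⊗ (Dᵢ ⊗ Id_k)`, and every
`M = Σ_{i,j} e_i e_jᵗ ⊗ B_{ij} ∈ M_m ⊗ M_k`, one has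
`G_{B̃}(Σ_{i,j} e_j e_iᵗ ⊗ B_{ij}ᵗ) = G_B((Σ_i B_{ii})ᵗ) ⊗ Id_k`. -/
theorem stmt13 {k m : ℕ} (n : ℕ)
    (C : Fin n → Matrix (Fin k) (Fin k) ℂ) (D : Fin n → Matrix (Fin m) (Fin m) ℂ)
    (B : Matrix (Fin k × Fin m) (Fin k × Fin m) ℂ)
    (hB : B = ∑ i, C i ⊗ₖ D i)
    (Bij : Fin m → Fin m → Matrix (Fin k) (Fin k) ℂ) :
    Gmap (∑ i, ((1 : Matrix (Fin m) (Fin m) ℂ) ⊗ₖ C i) ⊗ₖ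
        (D i ⊗ₖ (1 : Matrix (Fin k) (Fin k) ℂ)))
      (∑ i : Fin m, ∑ j : Fin m, Matrix.single j i (1 : ℂ) ⊗ₖ (Bij i j)ᵀ) =
    Gmap B (∑ i : Fin m, Bij i i)ᵀ ⊗ₖ (1 : Matrix (Fin k) (Fin k) ℂ) := by
  simp only [hB, gmap_sum, gmap_kronecker, trace_sum_single_kronecker_mul_one_kronecker,
    transpose_sum, sum_kronecker, smul_kronecker]

end
end

section
/- Let T : M_k(ℂ) → M_k(ℂ) be a completely positive map. If V ∈ M_k(ℂ) is an orthogonal projection such that T(VM_kV) ⊆ VM_kV, then T(VM_k + M_kV) ⊆ VM_k + M_kV, where VM_k + M_kV = {VX + YV : X, Y ∈ M_k(ℂ)}. -/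
open scoped Kronecker ComplexOrder
open Matrix

noncomputable section

/-! With `P = 1 - V`, invariance of the corner gives `P T(V) P = 0`; in Kraus form this reads
`∑ bᵢ bᵢᴴ = 0` with `bᵢ = P Aᵢ V`, so every `P Aᵢ V` vanishes. Hence each Kraus term kills
`V X + Y V` after compression by `P`, i.e. `P T(Z) P = 0`, and any `Z'` with `P Z' P = 0` is
`V Z' + (P Z') V`. -/

theorem Matrix.eq_zero_of_sum_mul_conjTranspose_self_eq_zero {ι m n R : Type*} [Fintype m]
    [Fintype n] [CommRing R] [PartialOrder R] [StarRing R] [StarOrderedRing R] [NoZeroDivisors R]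
    {s : Finset ι} {B : ι → Matrix m n R} (h : ∑ i ∈ s, B i * (B i)ᴴ = 0) {i : ι} (hi : i ∈ s) :
    B i = 0 := by
  have htrace : ∑ j ∈ s, (B j * (B j)ᴴ).trace = 0 := by rw [← trace_sum, h, trace_zero]
  rw [Finset.sum_eq_zero_iff_of_nonneg fun j _ => (posSemidef_self_mul_conjTranspose _).trace_nonneg]
    at htrace
  exact trace_mul_conjTranspose_self_eq_zero_iff.mp (htrace i hi)

theorem eq_mul_add_mul_of_one_sub_mul_mul_one_sub_eq_zero {R : Type*} [Ring R] {v z : R}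
    (h : (1 - v) * z * (1 - v) = 0) : z = v * z + (1 - v) * z * v :=
  calc z = v * z + (1 - v) * z * v + (1 - v) * z * (1 - v) := by noncomm_ring
    _ = v * z + (1 - v) * z * v := by rw [h, add_zero]

section StarRing

variable {R : Type*} [Ring R] [StarRing R]

theorem IsStarProjection.one_sub_mul_conj_mul_one_sub {v : R} (hv : IsStarProjection v) (a : R) :
    (1 - v) * (a * v * star a) * (1 - v) = (1 - v) * a * v * star ((1 - v) * a * v) := by
  rw [star_mul, star_mul, hv.one_sub.isSelfAdjoint.star_eq, hv.isSelfAdjoint.star_eq]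
  calc (1 - v) * (a * v * star a) * (1 - v) = (1 - v) * a * (v * v) * (star a * (1 - v)) := by
        rw [hv.isIdempotentElem.eq]; noncomm_ring
    _ = (1 - v) * a * v * (v * (star a * (1 - v))) := by noncomm_ring

theorem IsSelfAdjoint.one_sub_mul_conj_mul_one_sub_eq_zero {v a : R} (hv : IsSelfAdjoint v)
    (ha : (1 - v) * a * v = 0) (x y : R) :
    (1 - v) * (a * (v * x + y * v) * star a) * (1 - v) = 0 := by
  have ha' : v * star a * (1 - v) = 0 := by
    simpa [star_mul, hv.star_eq, mul_assoc] using congrArg star ha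
  calc (1 - v) * (a * (v * x + y * v) * star a) * (1 - v)
      = (1 - v) * a * v * (x * star a * (1 - v)) + (1 - v) * a * y * (v * star a * (1 - v)) := by
        noncomm_ring
    _ = 0 := by rw [ha, ha', zero_mul, mul_zero, add_zero]

end StarRing

theorem one_sub_mul_kraus_mul_eq_zero {n ι : Type*} [Fintype n] [DecidableEq n] [Fintype ι]
    {T : Matrix n n ℂ → Matrix n n ℂ} {A : ι → Matrix n n ℂ}
    (hA : ∀ X, T X = ∑ i, A i * X * (A i)ᴴ) {V : Matrix n n ℂ} (hV : IsStarProjection V)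
    (hinv : LeavesInv T V) (i : ι) : (1 - V) * A i * V = 0 := by
  have hTV : T V = V * T V * V := by simpa [hV.isIdempotentElem.eq] using hinv 1
  have hcorner : (1 - V) * T V * (1 - V) = 0 := by
    rw [hTV, show (1 - V) * (V * T V * V) * (1 - V) = (1 - V) * V * T V * (V * (1 - V)) by
      noncomm_ring, hV.one_sub_mul_self, hV.mul_one_sub_self, zero_mul, zero_mul]
  have hsum : ∑ j, (1 - V) * A j * V * ((1 - V) * A j * V)ᴴ = 0 := by
    rw [← hcorner, hA, Finset.mul_sum, Finset.sum_mul]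
    exact Finset.sum_congr rfl fun j _ => (hV.one_sub_mul_conj_mul_one_sub (A j)).symm
  exact eq_zero_of_sum_mul_conjTranspose_self_eq_zero hsum (Finset.mem_univ i)

/-- Lemma 1: if `T` is completely positive and the corner `V M V` is invariant,
then `V M + M V` is invariant. -/
theorem stmt15 {k : ℕ}
    (T : Matrix (Fin k) (Fin k) ℂ → Matrix (Fin k) (Fin k) ℂ) (hT : IsCPMap T)
    (V : Matrix (Fin k) (Fin k) ℂ) (hV : IsOrthProj V)
    (hinv : LeavesInv T V) :
    ∀ Z : Matrix (Fin k) (Fin k) ℂ,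
      (∃ X Y : Matrix (Fin k) (Fin k) ℂ, Z = V * X + Y * V) →
      ∃ X' Y' : Matrix (Fin k) (Fin k) ℂ, T Z = V * X' + Y' * V := by
  rintro _ ⟨X, Y, rfl⟩
  obtain ⟨r, A, hA⟩ := hT
  have hVproj : IsStarProjection V := ⟨hV.2, hV.1⟩
  have hAV := one_sub_mul_kraus_mul_eq_zero hA hVproj hinv
  refine ⟨_, _, eq_mul_add_mul_of_one_sub_mul_mul_one_sub_eq_zero ?_⟩
  rw [hA, Finset.mul_sum, Finset.sum_mul]
  exact Finset.sum_eq_zero fun i _ =>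
    hVproj.isSelfAdjoint.one_sub_mul_conj_mul_one_sub_eq_zero (hAV i) X Y

end
end

section
/- Let T : M_k(ℂ) → M_k(ℂ) be a positive map and let V_1, V ∈ M_k(ℂ) be orthogonal projections with Im(V_1) ⊆ Im(V) and T(VM_kV) ⊆ VM_kV. If T(V_1M_kV_1) ⊆ V_1M_kV_1, then V T*((V−V_1)M_k(V−V_1)) V ⊆ (V−V_1)M_k(V−V_1). -/
/-!
Put `P = V - V₁` and `Z = T^*(P X P)`. As `V = V₁ + P`, it suffices that `V₁ Z V = 0` and
`V Z V₁ = 0`, and by duality these reduce to `P T(V₁ W V) P = 0` and `P T(V W V₁) P = 0`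
for all `W`. The `V₁`-corner parts vanish by invariance. For the off-diagonal parts,
positivity of `T(RᴴR)` with `R = Wᴴ V₁ + x P`, compressed by `P`, makes
`x K₁ + x̄ K₂ + |x|² S` positive semidefinite for every `x ∈ ℂ`, which forces `K₁ = K₂ = 0`.
-/

open scoped Kronecker ComplexOrder
open Matrix

noncomputable section

open ComplexConjugate

theorem IsIdempotentElem.mul_eq_right_of_range_le {n R : Type*} [Fintype n] [DecidableEq n]
    [CommRing R] {V W : Matrix n n R} (hV : IsIdempotentElem V)
    (h : LinearMap.range W.mulVecLin ≤ LinearMap.range V.mulVecLin) : V * W = W := by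
  have hV' : IsIdempotentElem V.mulVecLin := by
    rw [IsIdempotentElem, Module.End.mul_eq_comp, ← mulVecLin_mul, hV.eq]
  apply toLin'.injective
  rw [toLin'_apply', toLin'_apply', mulVecLin_mul]
  exact (LinearMap.IsIdempotentElem.comp_eq_right_iff hV' _).2 h

theorem Complex.eq_zero_of_forall_nonneg_mul_add_conj_mul {a b s : ℂ}
    (h : ∀ x : ℂ, 0 ≤ x * a + conj x * b + (conj x * x) * s) : a = 0 ∧ b = 0 := by
  -- on each real line `t ↦ t x` the form is `t w + t² c ≥ 0`, so its linear part `w` vanishes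
  have hw : ∀ x : ℂ, x * a + conj x * b = 0 := by
    intro x
    set w := x * a + conj x * b
    set c := conj x * x * s
    have ht : ∀ t : ℝ, 0 ≤ t * w.re + t ^ 2 * c.re ∧ 0 = t * w.im + t ^ 2 * c.im := by
      intro t
      have hexpand : (t * x) * a + conj (t * x) * b + (conj (t * x) * (t * x)) * s
          = t * w + ((t ^ 2 : ℝ) : ℂ) * c := by
        simp only [map_mul, Complex.conj_ofReal, w, c]
        push_cast
        ring
      have hnonneg := h (t * x)
      rw [hexpand, Complex.le_def] at hnonneg
      simpa only [Complex.add_re, Complex.add_im, Complex.re_ofReal_mul, Complex.im_ofReal_mul,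
        Complex.zero_re, Complex.zero_im] using hnonneg
    have hre : w.re = 0 := by
      have hdisc := discrim_le_zero (a := c.re) (b := w.re) (c := 0) fun t => by
        linarith [(ht t).1]
      rw [discrim] at hdisc
      nlinarith
    have him : w.im = 0 := by linarith [(ht 1).2, (ht (-1)).2]
    exact Complex.ext hre him
  have h1 := hw 1
  have hI := hw Complex.I
  simp only [map_one, one_mul, Complex.conj_I] at h1 hI
  have ha : a = 0 := by
    have : (2 * Complex.I) * a = 0 := by linear_combination Complex.I * h1 + hI
    simpa using this
  exact ⟨ha, by linear_combination h1 - ha⟩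

section

variable {n : Type*} [Fintype n]

theorem Matrix.eq_zero_of_forall_star_dotProduct_mulVec_eq_zero [DecidableEq n]
    {K : Matrix n n ℂ} (h : ∀ y, star y ⬝ᵥ K *ᵥ y = 0) : K = 0 := by
  have := (inner_map_self_eq_zero (toEuclideanLin K)).1 fun x => by
    rw [← inner_conj_symm, EuclideanSpace.inner_eq_star_dotProduct, ofLp_toLpLin, toLin'_apply,
      dotProduct_comm, h, map_zero]
  exact toEuclideanLin.injective (by simpa using this)

theorem Matrix.eq_zero_of_forall_posSemidef_smul_add_conj_smul [DecidableEq n]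
    {K₁ K₂ S : Matrix n n ℂ}
    (h : ∀ x : ℂ, (x • K₁ + conj x • K₂ + (conj x * x) • S).PosSemidef) :
    K₁ = 0 ∧ K₂ = 0 := by
  have hquad (y : n → ℂ) : star y ⬝ᵥ K₁ *ᵥ y = 0 ∧ star y ⬝ᵥ K₂ *ᵥ y = 0 :=
    Complex.eq_zero_of_forall_nonneg_mul_add_conj_mul fun x => by
      simpa only [add_mulVec, smul_mulVec, dotProduct_add, dotProduct_smul, smul_eq_mul]
        using (h x).dotProduct_mulVec_nonneg y
  exact ⟨eq_zero_of_forall_star_dotProduct_mulVec_eq_zero fun y => (hquad y).1,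
    eq_zero_of_forall_star_dotProduct_mulVec_eq_zero fun y => (hquad y).2⟩

variable {T : Matrix n n ℂ → Matrix n n ℂ}

theorem LeavesInv.conjTranspose_mul_map_mul_eq_zero {E C : Matrix n n ℂ} (hinv : LeavesInv T E)
    (hE : E.IsHermitian) (hEC : E * C = 0) (X : Matrix n n ℂ) : Cᴴ * T (E * X * E) * C = 0 := by
  have hCE : Cᴴ * E = 0 := by rw [← hE.eq, ← conjTranspose_mul, hEC, conjTranspose_zero]
  rw [hinv, ← Matrix.mul_assoc, ← Matrix.mul_assoc, hCE, Matrix.zero_mul, Matrix.zero_mul,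
    Matrix.zero_mul]

theorem IsPosMap.conjTranspose_mul_map_cross_mul_eq_zero [DecidableEq n] (hpos : IsPosMap T)
    (hlin : IsLinearMap ℂ T) {E C : Matrix n n ℂ} (hE : E.IsHermitian) (hinv : LeavesInv T E)
    (hEC : E * C = 0) (B Q : Matrix n n ℂ) :
    Cᴴ * T (E * B * Q) * C = 0 ∧ Cᴴ * T (Qᴴ * Bᴴ * E) * C = 0 := by
  let L := hlin.mk' T
  refine eq_zero_of_forall_posSemidef_smul_add_conj_smul (S := Cᴴ * T (Qᴴ * Q) * C) fun x => ?_
  set R := Bᴴ * E + x • Q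
  have hR : Rᴴ * R = E * (B * Bᴴ) * E + x • (E * B * Q) + conj x • (Qᴴ * Bᴴ * E)
      + (conj x * x) • (Qᴴ * Q) := by
    simp only [R, conjTranspose_add, conjTranspose_mul, conjTranspose_smul,
      conjTranspose_conjTranspose, hE.eq, Matrix.add_mul, Matrix.mul_add, Matrix.smul_mul,
      Matrix.mul_smul, Matrix.mul_assoc, Complex.star_def]
    module
  have hpsd := (hpos _ (posSemidef_conjTranspose_mul_self R)).conjTranspose_mul_mul_same C
  rw [hR] at hpsd
  change (Cᴴ * L _ * C).PosSemidef at hpsd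
  simpa only [map_add, map_smul, Matrix.mul_add, Matrix.add_mul, Matrix.mul_smul,
    Matrix.smul_mul, L, IsLinearMap.mk'_apply,
    hinv.conjTranspose_mul_map_mul_eq_zero hE hEC, zero_add] using hpsd

theorem mul_adjoint_mul_eq_zero_of_mul_map_mul_eq_zero {Tstar : Matrix n n ℂ → Matrix n n ℂ}
    (hadj : ∀ X Y : Matrix n n ℂ, (T X * Yᴴ).trace = (X * (Tstar Y)ᴴ).trace)
    {E F P : Matrix n n ℂ} (hE : E.IsHermitian) (hF : F.IsHermitian) (hP : P.IsHermitian)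
    (h : ∀ W, P * T (E * W * F) * P = 0) (X : Matrix n n ℂ) :
    E * Tstar (P * X * P) * F = 0 := by
  refine ext_iff_trace_mul_right.2 fun W => ?_
  rw [Matrix.zero_mul, trace_zero]
  set Z := Tstar (P * X * P)
  calc (E * Z * F * W).trace = star ((E * Wᴴ * F * Zᴴ).trace) := by
        rw [← trace_conjTranspose]
        simp only [conjTranspose_mul, conjTranspose_conjTranspose, hE.eq, hF.eq,
          Matrix.mul_assoc]
        rw [trace_mul_comm]
        simp only [Matrix.mul_assoc]
    _ = star ((P * T (E * Wᴴ * F) * P * Xᴴ).trace) := by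
        rw [← hadj, conjTranspose_mul, conjTranspose_mul, hP.eq]
        simp only [← Matrix.mul_assoc]
        rw [trace_mul_cycle]
        simp only [Matrix.mul_assoc]
    _ = 0 := by rw [h, Matrix.zero_mul, trace_zero, star_zero]

theorem IsPosMap.mul_map_mul_add_eq_zero [DecidableEq n] (hpos : IsPosMap T)
    (hlin : IsLinearMap ℂ T) {E P : Matrix n n ℂ} (hE : E.IsHermitian) (hP : P.IsHermitian)
    (hinv : LeavesInv T E)
    (hEP : E * P = 0) (W : Matrix n n ℂ) :
    P * T (E * W * (E + P)) * P = 0 ∧ P * T ((E + P) * W * E) * P = 0 := by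
  have hcorner := hinv.conjTranspose_mul_map_mul_eq_zero hE hEP W
  obtain ⟨hleft, -⟩ := hpos.conjTranspose_mul_map_cross_mul_eq_zero hlin hE hinv hEP W P
  obtain ⟨-, hright⟩ := hpos.conjTranspose_mul_map_cross_mul_eq_zero hlin hE hinv hEP Wᴴ P
  rw [hP.eq] at hcorner hleft hright
  rw [conjTranspose_conjTranspose] at hright
  constructor
  · rw [Matrix.mul_add, hlin.map_add, Matrix.mul_add, Matrix.add_mul, hcorner, hleft, add_zero]
  · rw [Matrix.add_mul, Matrix.add_mul, hlin.map_add, Matrix.mul_add, Matrix.add_mul, hcorner,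
      hright, add_zero]

end

theorem stmt16_general {k : ℕ}
    (T Tstar : Matrix (Fin k) (Fin k) ℂ → Matrix (Fin k) (Fin k) ℂ)
    (hlin : IsLinearMap ℂ T) (hpos : IsPosMap T)
    (hadj : ∀ X Y : Matrix (Fin k) (Fin k) ℂ,
      (T X * Yᴴ).trace = (X * (Tstar Y)ᴴ).trace)
    (V1 V : Matrix (Fin k) (Fin k) ℂ)
    (hV1 : IsOrthProj V1) (hV : IsOrthProj V)
    (hsub : LinearMap.range V1.mulVecLin ≤ LinearMap.range V.mulVecLin)
    (hinv1 : LeavesInv T V1) :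
    ∀ X : Matrix (Fin k) (Fin k) ℂ, ∃ Y : Matrix (Fin k) (Fin k) ℂ,
      V * Tstar ((V - V1) * X * (V - V1)) * V = (V - V1) * Y * (V - V1) := by
  intro X
  have hVV1 : V * V1 = V1 := IsIdempotentElem.mul_eq_right_of_range_le hV.2 hsub
  have hV1V : V1 * V = V1 := by
    simpa only [conjTranspose_mul, hV.1.eq, hV1.1.eq] using congrArg conjTranspose hVV1
  set P := V - V1
  have hP : P.IsHermitian := hV.1.sub hV1.1
  have hV1P : V1 * P = 0 := by rw [Matrix.mul_sub, hV1V, hV1.2, sub_self]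
  have hcompress := hpos.mul_map_mul_add_eq_zero hlin hV1.1 hP hinv1 hV1P
  rw [add_sub_cancel] at hcompress
  set Z := Tstar (P * X * P)
  have hZ₁ : V1 * Z * V = 0 :=
    mul_adjoint_mul_eq_zero_of_mul_map_mul_eq_zero hadj hV1.1 hV.1 hP (fun W => (hcompress W).1) X
  have hZ₂ : V * Z * V1 = 0 :=
    mul_adjoint_mul_eq_zero_of_mul_map_mul_eq_zero hadj hV.1 hV1.1 hP (fun W => (hcompress W).2) X
  refine ⟨Z, ?_⟩
  calc V * Z * V = V * Z * V - V1 * Z * V - V * Z * V1 + V1 * Z * V * V1 := by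
        rw [hZ₁, hZ₂, Matrix.zero_mul, sub_zero, sub_zero, add_zero]
    _ = P * Z * P := by
        simp only [P, Matrix.sub_mul, Matrix.mul_sub, Matrix.mul_assoc, hVV1]
        abel

/-- Lemma 2, item a): if `T` is a positive map, `V₁, V` orthogonal projections with
`Im V₁ ⊆ Im V`, the corners of `V` and of `V₁` are `T`-invariant, then
`V T^*((V − V₁) M (V − V₁)) V ⊆ (V − V₁) M (V − V₁)`. -/
theorem stmt16 {k : ℕ}
    (T Tstar : Matrix (Fin k) (Fin k) ℂ → Matrix (Fin k) (Fin k) ℂ)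
    (hlin : IsLinearMap ℂ T) (hpos : IsPosMap T)
    (hadj : ∀ X Y : Matrix (Fin k) (Fin k) ℂ,
      (T X * Yᴴ).trace = (X * (Tstar Y)ᴴ).trace)
    (V1 V : Matrix (Fin k) (Fin k) ℂ)
    (hV1 : IsOrthProj V1) (hV : IsOrthProj V)
    (hsub : LinearMap.range V1.mulVecLin ≤ LinearMap.range V.mulVecLin)
    (hinv : LeavesInv T V) (hinv1 : LeavesInv T V1) :
    ∀ X : Matrix (Fin k) (Fin k) ℂ, ∃ Y : Matrix (Fin k) (Fin k) ℂ,
      V * Tstar ((V - V1) * X * (V - V1)) * V = (V - V1) * Y * (V - V1) :=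
  stmt16_general T Tstar hlin hpos hadj V1 V hV1 hV hsub hinv1

end
end

section
/- Let T : M_k(ℂ) → M_k(ℂ) be a positive map and V ∈ M_k(ℂ) an orthogonal projection with T(VM_kV) ⊆ VM_kV. Then T|_{VM_kV} : VM_kV → VM_kV is irreducible if and only if the map X ↦ V T*(X) V, regarded as a map VM_kV → VM_kV, is irreducible. -/
/-!
For a sub-projection `P ≤ V`, invariance of the corner of `P` under a positive map `Φ` is
detected by `Φ P` alone: for positive `X` one has `P X P ≤ ‖X‖ • P`, so `Φ (P X P)` is dominated
by `‖X‖ • Φ P`. Thus `T` leaves the corner of `P` invariant iff `T P` lives in that corner, i.e.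
iff `tr ((V - P) T P) = 0`. By duality this trace equals `tr (P (V T*(V - P) V))`, and `T*` is
positive, so the same criterion applied to `X ↦ V T*(X) V` shows that it vanishes iff the corner
of `V - P` is invariant under that map. Hence `P ↦ V - P` matches the invariant sub-corners of
the two maps, exchanging `0` and `V`.
-/

open scoped Kronecker ComplexOrder
open Matrix

noncomputable section

open scoped MatrixOrder Matrix.Norms.L2Operator

variable {n : Type*} [Fintype n]

namespace Matrix

lemma eq_of_forall_trace_mul_conjTranspose_eq {C D : Matrix n n ℂ}
    (h : ∀ X, (X * Cᴴ).trace = (X * Dᴴ).trace) : C = D := by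
  have h0 : ((C - D) * (C - D)ᴴ).trace = 0 := by
    rw [conjTranspose_sub, Matrix.mul_sub, trace_sub, h, sub_self]
  exact sub_eq_zero.mp (trace_mul_conjTranspose_self_eq_zero_iff.mp h0)

lemma trace_mul_vecMulVec_star (M : Matrix n n ℂ) (x : n → ℂ) :
    (M * vecMulVec x (star x)).trace = star x ⬝ᵥ (M *ᵥ x) := by
  rw [mul_vecMulVec, trace_vecMulVec, dotProduct_comm]

lemma posSemidef_of_forall_dotProduct_mulVec_nonneg [DecidableEq n] {M : Matrix n n ℂ}
    (h : ∀ x, 0 ≤ star x ⬝ᵥ (M *ᵥ x)) : M.PosSemidef := by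
  rw [← isPositive_toEuclideanLin_iff, LinearMap.isPositive_iff_complex]
  intro x
  obtain ⟨hre, him⟩ := Complex.nonneg_iff.mp (h x)
  have e : x.ofLp ⬝ᵥ star (M *ᵥ x.ofLp) = star (star x.ofLp ⬝ᵥ M *ᵥ x.ofLp) := by
    rw [star_dotProduct, star_star, dotProduct_comm]
  simp only [EuclideanSpace.inner_eq_star_dotProduct, toLpLin_apply, RCLike.re_to_complex, e]
  exact ⟨Complex.ext (by simp) (by simp [← him]), by simpa using hre⟩

lemma PosSemidef.trace_mul_nonneg {A B : Matrix n n ℂ} (hA : A.PosSemidef) (hB : B.PosSemidef) :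
    0 ≤ (A * B).trace := by
  classical
  obtain ⟨C, rfl⟩ := CStarAlgebra.nonneg_iff_eq_star_mul_self.mp hB.nonneg
  rw [← Matrix.mul_assoc, trace_mul_cycle, star_eq_conjTranspose]
  exact (hA.mul_mul_conjTranspose_same C).trace_nonneg

lemma PosSemidef.mul_eq_zero_of_mul_mul_eq_zero_s17 {A Q : Matrix n n ℂ} (hA : A.PosSemidef)
    (hQ : Q.IsHermitian) (h : Q * A * Q = 0) : A * Q = 0 := by
  classical
  obtain ⟨B, rfl⟩ := CStarAlgebra.nonneg_iff_eq_star_mul_self.mp hA.nonneg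
  have hBQ : B * Q = 0 := by
    rw [← conjTranspose_mul_self_eq_zero, conjTranspose_mul, hQ.eq, ← h]
    simp only [star_eq_conjTranspose, Matrix.mul_assoc]
  rw [Matrix.mul_assoc, hBQ, Matrix.mul_zero]

lemma PosSemidef.mul_mul_eq_self_of_mul_mul_eq_zero {A P Q : Matrix n n ℂ} (hA : A.PosSemidef)
    (hQ : Q.IsHermitian) (hA' : (P + Q) * A * (P + Q) = A) (h : Q * A * Q = 0) :
    P * A * P = A := by
  have hAQ := hA.mul_eq_zero_of_mul_mul_eq_zero_s17 hQ h
  have hQA : Q * A = 0 := by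
    rw [← hQ.eq, ← hA.1.eq, ← conjTranspose_mul, hAQ, conjTranspose_zero]
  conv_rhs => rw [← hA']
  rw [Matrix.add_mul, hQA, add_zero, Matrix.mul_add, Matrix.mul_assoc P A Q, hAQ,
    Matrix.mul_zero, add_zero]

lemma PosSemidef.mul_mul_eq_self_iff_trace_mul_eq_zero {A P Q : Matrix n n ℂ}
    (hA : A.PosSemidef) (hP : IsOrthProj P) (hQ : IsOrthProj Q) (hPQ : P * Q = 0)
    (hA' : (P + Q) * A * (P + Q) = A) : P * A * P = A ↔ (Q * A).trace = 0 := by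
  have hQP : Q * P = 0 := by
    rw [← hP.1.eq, ← hQ.1.eq, ← conjTranspose_mul, hPQ, conjTranspose_zero]
  refine ⟨fun h => ?_, fun h => hA.mul_mul_eq_self_of_mul_mul_eq_zero hQ.1 hA' ?_⟩
  · rw [← h, ← Matrix.mul_assoc, ← Matrix.mul_assoc, hQP, Matrix.zero_mul, Matrix.zero_mul,
      trace_zero]
  · have hQAQ : (Q * A * Q).PosSemidef := by
      simpa only [hQ.1.eq] using hA.mul_mul_conjTranspose_same Q
    rw [← hQAQ.trace_eq_zero_iff, trace_mul_cycle, hQ.2, h]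

end Matrix

namespace IsOrthProj

variable {V P : Matrix n n ℂ}

lemma posSemidef (hP : IsOrthProj P) : P.PosSemidef := by
  simpa only [hP.1.eq, hP.2] using posSemidef_conjTranspose_mul_self P

lemma mul_eq_of_mul_eq (hV : IsOrthProj V) (hP : IsOrthProj P) (h : V * P = P) : P * V = P := by
  rw [← hP.1.eq, ← hV.1.eq, ← conjTranspose_mul, h]

lemma sub (hV : IsOrthProj V) (hP : IsOrthProj P) (h : V * P = P) : IsOrthProj (V - P) := by
  refine ⟨hV.1.sub hP.1, ?_⟩
  rw [Matrix.sub_mul, Matrix.mul_sub, Matrix.mul_sub, hV.2, h, hV.mul_eq_of_mul_eq hP h, hP.2]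
  abel

lemma range_mulVecLin_le_iff (hV : IsOrthProj V) :
    LinearMap.range P.mulVecLin ≤ LinearMap.range V.mulVecLin ↔ V * P = P := by
  constructor
  · intro h
    refine ext_iff_mulVec.mpr fun x => ?_
    obtain ⟨y, hy⟩ := h (LinearMap.mem_range_self P.mulVecLin x)
    simp only [mulVecLin_apply] at hy
    rw [← mulVec_mulVec, ← hy, mulVec_mulVec, hV.2]
  · intro h
    rw [← h, mulVecLin_mul]
    exact LinearMap.range_comp_le_range _ _

end IsOrthProj

section Adjoint

variable {T Tstar : Matrix n n ℂ → Matrix n n ℂ}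

lemma isLinearMap_of_trace_adjoint
    (hadj : ∀ X Y, (T X * Yᴴ).trace = (X * (Tstar Y)ᴴ).trace) : IsLinearMap ℂ Tstar where
  map_add A B := eq_of_forall_trace_mul_conjTranspose_eq fun X => by
    simp only [conjTranspose_add, Matrix.mul_add, trace_add, ← hadj]
  map_smul c A := eq_of_forall_trace_mul_conjTranspose_eq fun X => by
    simp only [conjTranspose_smul, mul_smul_comm, trace_smul, ← hadj]

lemma IsPosMap.of_trace_adjoint [DecidableEq n] (hpos : IsPosMap T)
    (hadj : ∀ X Y, (T X * Yᴴ).trace = (X * (Tstar Y)ᴴ).trace) : IsPosMap Tstar := by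
  intro B hB
  have h : (Tstar B)ᴴ.PosSemidef := posSemidef_of_forall_dotProduct_mulVec_nonneg fun x => by
    rw [← trace_mul_vecMulVec_star, trace_mul_comm, ← hadj, hB.1.eq]
    exact (hpos _ (posSemidef_vecMulVec_self_star x)).trace_mul_nonneg hB
  simpa using h.conjTranspose

end Adjoint

section PositiveMap

variable [DecidableEq n]

lemma LinearMap.ext_posSemidef {M : Type*} [AddCommGroup M] [Module ℂ M]
    {f g : Matrix n n ℂ →ₗ[ℂ] M} (h : ∀ X, X.PosSemidef → f X = g X) : f = g :=
  LinearMap.ext_on CStarAlgebra.span_nonneg fun X hX => h X (nonneg_iff_posSemidef.mp hX)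

lemma leavesInv_of_posSemidef (Φ : Matrix n n ℂ →ₗ[ℂ] Matrix n n ℂ) {P : Matrix n n ℂ}
    (h : ∀ X, X.PosSemidef → Φ (P * X * P) = P * Φ (P * X * P) * P) : LeavesInv Φ P := by
  have hext := LinearMap.ext_posSemidef (f := Φ ∘ₗ LinearMap.mulLeftRight ℂ (P, P))
    (g := LinearMap.mulLeftRight ℂ (P, P) ∘ₗ Φ ∘ₗ LinearMap.mulLeftRight ℂ (P, P))
    (by simpa using h)
  intro X
  simpa using LinearMap.congr_fun hext X

lemma IsPosMap.apply_mul_mul_le {Φ : Matrix n n ℂ →ₗ[ℂ] Matrix n n ℂ} (hΦ : IsPosMap Φ)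
    {P X : Matrix n n ℂ} (hP : IsOrthProj P) (hX : X.PosSemidef) :
    Φ (P * X * P) ≤ ‖X‖ • Φ P := by
  have hle : P * X * P ≤ ‖X‖ • P := by
    have := star_left_conjugate_le_conjugate (IsSelfAdjoint.le_algebraMap_norm_self hX.1) P
    simpa [star_eq_conjTranspose, hP.1.eq, Algebra.algebraMap_eq_smul_one, hP.2] using this
  have := hΦ _ hle
  rwa [map_sub, LinearMap.map_smul_of_tower] at this

lemma leavesInv_iff_mul_mul_eq {Φ : Matrix n n ℂ →ₗ[ℂ] Matrix n n ℂ} (hΦ : IsPosMap Φ)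
    {P : Matrix n n ℂ} (hP : IsOrthProj P) : LeavesInv Φ P ↔ P * Φ P * P = Φ P := by
  refine ⟨fun h => ?_, fun h => leavesInv_of_posSemidef Φ fun X hX => ?_⟩
  · simpa [hP.2] using (h 1).symm
  set Q := 1 - P
  have hQ : Q.IsHermitian := isHermitian_one.sub hP.1
  have hA := hΦ _ (hX.mul_mul_conjTranspose_same P)
  rw [hP.1.eq] at hA
  have hQΦ : Q * Φ P * Q = 0 := by
    rw [← h]
    simp [Q, Matrix.sub_mul, ← Matrix.mul_assoc, hP.2]
  have hQAQ : Q * Φ (P * X * P) * Q = 0 := by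
    refine le_antisymm ?_ (by simpa [hQ.eq] using (hA.mul_mul_conjTranspose_same Q).nonneg)
    have := star_left_conjugate_le_conjugate (hΦ.apply_mul_mul_le hP hX) Q
    simpa [star_eq_conjTranspose, hQ.eq, hQΦ] using this
  exact (hA.mul_mul_eq_self_of_mul_mul_eq_zero hQ (by simp [Q]) hQAQ).symm

end PositiveMap

section Irreducible

variable [DecidableEq n]

lemma isIrredOn_of_leavesInv_sub {T S : Matrix n n ℂ → Matrix n n ℂ} {V : Matrix n n ℂ}
    (hV : IsOrthProj V)
    (h : ∀ P, IsOrthProj P → V * P = P → LeavesInv T P → LeavesInv S (V - P))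
    (hS : IsIrredOn S V) : IsIrredOn T V := by
  intro P hP hPV hT
  rw [hV.range_mulVecLin_le_iff] at hPV
  have hVP : V * (V - P) = V - P := by rw [Matrix.mul_sub, hV.2, hPV]
  rcases hS (V - P) (hV.sub hP hPV) (hV.range_mulVecLin_le_iff.mpr hVP) (h P hP hPV hT) with
    hP0 | hPV
  · exact .inr (sub_eq_self.mp hP0)
  · exact .inl (sub_eq_zero.mp hPV).symm

lemma isIrredOn_iff_of_leavesInv_iff_sub {T S : Matrix n n ℂ → Matrix n n ℂ} {V : Matrix n n ℂ}
    (hV : IsOrthProj V)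
    (h : ∀ P, IsOrthProj P → V * P = P → (LeavesInv T P ↔ LeavesInv S (V - P))) :
    IsIrredOn T V ↔ IsIrredOn S V := by
  refine ⟨isIrredOn_of_leavesInv_sub hV fun P hP hPV hS => ?_,
    isIrredOn_of_leavesInv_sub hV fun P hP hPV => (h P hP hPV).mp⟩
  have hVP : V * (V - P) = V - P := by rw [Matrix.mul_sub, hV.2, hPV]
  simpa using (h (V - P) (hV.sub hP hPV) hVP).mpr (by simpa using hS)

end Irreducible

lemma leavesInv_iff_leavesInv_sub_compress_adjoint [DecidableEq n]
    {T Tstar : Matrix n n ℂ → Matrix n n ℂ} (hlin : IsLinearMap ℂ T) (hpos : IsPosMap T)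
    (hadj : ∀ X Y, (T X * Yᴴ).trace = (X * (Tstar Y)ᴴ).trace)
    {V P : Matrix n n ℂ} (hV : IsOrthProj V) (hinv : LeavesInv T V) (hP : IsOrthProj P)
    (hVP : V * P = P) :
    LeavesInv T P ↔ LeavesInv (fun X => V * Tstar X * V) (V - P) := by
  set W := V - P
  have hW : IsOrthProj W := hV.sub hP hVP
  have hPV : P * V = P := hV.mul_eq_of_mul_eq hP hVP
  have hPW : P * W = 0 := by simp [W, Matrix.mul_sub, hPV, hP.2]
  have hWP : W * P = 0 := by simp [W, Matrix.sub_mul, hVP, hP.2]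
  have hPWV : P + W = V := add_sub_cancel P V
  have hTstar : IsPosMap Tstar := hpos.of_trace_adjoint hadj
  let S : Matrix n n ℂ →ₗ[ℂ] Matrix n n ℂ :=
    LinearMap.mulLeftRight ℂ (V, V) ∘ₗ (isLinearMap_of_trace_adjoint hadj).mk' Tstar
  have hS : IsPosMap S := fun X hX => by
    simpa [S, hV.1.eq] using (hTstar X hX).mul_mul_conjTranspose_same V
  have hTP : V * T P * V = T P := by simpa [hVP, hPV] using (hinv P).symm
  have hSW : V * S W * V = S W := by
    change V * (V * Tstar W * V) * V = V * Tstar W * V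
    rw [← Matrix.mul_assoc, ← Matrix.mul_assoc, hV.2, Matrix.mul_assoc, hV.2]
  have htrace : (W * T P).trace = (P * S W).trace := calc
    (W * T P).trace = (T P * Wᴴ).trace := by rw [hW.1.eq, trace_mul_comm]
    _ = (P * (Tstar W)ᴴ).trace := hadj P W
    _ = (P * S W).trace := by
      simp only [(hTstar W hW.posSemidef).1.eq, S, LinearMap.comp_apply,
        LinearMap.mulLeftRight_apply, IsLinearMap.mk'_apply, ← Matrix.mul_assoc, hPV]
      rw [trace_mul_cycle, hVP]
  change LeavesInv (hlin.mk' T) P ↔ LeavesInv S W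
  rw [leavesInv_iff_mul_mul_eq hpos hP, leavesInv_iff_mul_mul_eq hS hW, IsLinearMap.mk'_apply,
    (hpos P hP.posSemidef).mul_mul_eq_self_iff_trace_mul_eq_zero hP hW hPW
      (by rw [hPWV]; exact hTP),
    (hS W hW.posSemidef).mul_mul_eq_self_iff_trace_mul_eq_zero hW hP hWP
      (by rw [add_comm, hPWV]; exact hSW), htrace]

/-- Lemma 2, item b): `T` restricted to the corner of `V` is irreducible iff the
map `X ↦ V T^*(X) V` restricted to the corner of `V` is irreducible. -/
theorem stmt17 {k : ℕ}
    (T Tstar : Matrix (Fin k) (Fin k) ℂ → Matrix (Fin k) (Fin k) ℂ)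
    (hlin : IsLinearMap ℂ T) (hpos : IsPosMap T)
    (hadj : ∀ X Y : Matrix (Fin k) (Fin k) ℂ,
      (T X * Yᴴ).trace = (X * (Tstar Y)ᴴ).trace)
    (V : Matrix (Fin k) (Fin k) ℂ) (hV : IsOrthProj V)
    (hinv : LeavesInv T V) :
    IsIrredOn T V ↔ IsIrredOn (fun X => V * Tstar X * V) V :=
  isIrredOn_iff_of_leavesInv_iff_sub hV fun _ hP hVP =>
    leavesInv_iff_leavesInv_sub_compress_adjoint hlin hpos hadj hV hinv hP hVP

end
end
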